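/- arXiv:2211.05600 — 12 statements merged into one kernel-verified Lean document; each statement's English description precedes it below -/
import Mathlib

section
/- Let M ≥ 1, τ ≥ 0, let b ∈ ℝ^M have b_i > 0 for every i, let σ_1,…,σ_M > 0, and let P_{ij}, D_{ij} ≥ 0 (1 ≤ i,j ≤ M) satisfy P_{ij} = D_{ji} for all i,j. Then the linear system c_i = b_i + τ ( Σ_j P_{ij} c_j/σ_j − Σ_j D_{ij} c_i/σ_i ), i = 1,…,M, has a unique solution c ∈ ℝ^M, and this solution satisfies c_i > 0 for every i. -/
open Finset

/-- Kernel triviality for a column-diagonally-dominant system. -/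
lemma mp_aux_kernel (M : ℕ) (d : Fin M → ℝ) (q : Fin M → Fin M → ℝ)
    (hq : ∀ i j, 0 ≤ q i j) (hcol : ∀ j, ∑ i, q i j = d j - 1)
    (e : Fin M → ℝ) (he : ∀ i, d i * e i = ∑ j, q i j * e j) : e = 0 := by
  have hd : ∀ j, 1 ≤ d j := by
    intro j
    have h0 : 0 ≤ ∑ i, q i j := Finset.sum_nonneg fun i _ => hq i j
    rw [hcol j] at h0; linarith
  have key : ∑ i, d i * |e i| ≤ ∑ j, (d j - 1) * |e j| := by
    calc ∑ i, d i * |e i| = ∑ i, |d i * e i| := by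
          refine Finset.sum_congr rfl fun i _ => ?_
          rw [abs_mul, abs_of_nonneg (show (0:ℝ) ≤ d i from by linarith [hd i])]
      _ = ∑ i, |∑ j, q i j * e j| := by
          refine Finset.sum_congr rfl fun i _ => by rw [he i]
      _ ≤ ∑ i, ∑ j, q i j * |e j| := by
          refine Finset.sum_le_sum fun i _ => ?_
          refine (Finset.abs_sum_le_sum_abs _ _).trans ?_
          refine Finset.sum_le_sum fun j _ => ?_
          rw [abs_mul, abs_of_nonneg (hq i j)]
      _ = ∑ j, (∑ i, q i j) * |e j| := by
          rw [Finset.sum_comm]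
          exact Finset.sum_congr rfl fun j _ => (Finset.sum_mul _ _ _).symm
      _ = ∑ j, (d j - 1) * |e j| := by
          exact Finset.sum_congr rfl fun j _ => by rw [hcol j]
  have hsum : ∑ i, |e i| ≤ 0 := by
    have : ∑ i, (d i * |e i| - (d i - 1) * |e i|) ≤ 0 := by
      rw [Finset.sum_sub_distrib]; linarith
    calc ∑ i, |e i| = ∑ i, (d i * |e i| - (d i - 1) * |e i|) := by
          exact Finset.sum_congr rfl fun i _ => by ring
      _ ≤ 0 := this
  funext i
  have h0 : ∀ i ∈ Finset.univ, |e i| = 0 := by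
    intro i _
    have := Finset.sum_nonneg (fun j (_ : j ∈ (Finset.univ : Finset (Fin M))) => abs_nonneg (e j))
    have heq : ∑ i, |e i| = 0 := le_antisymm hsum this
    exact (Finset.sum_eq_zero_iff_of_nonneg (fun j _ => abs_nonneg (e j))).mp heq i (Finset.mem_univ i)
  simpa [abs_eq_zero] using h0 i (Finset.mem_univ i)

/-- Positivity of any solution of a column-diagonally-dominant system with positive RHS. -/
lemma mp_aux_pos (M : ℕ) (b d : Fin M → ℝ) (q : Fin M → Fin M → ℝ)
    (hb : ∀ i, 0 < b i) (hq : ∀ i j, 0 ≤ q i j) (hcol : ∀ j, ∑ i, q i j = d j - 1)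
    (c : Fin M → ℝ) (hc : ∀ i, d i * c i = b i + ∑ j, q i j * c j) :
    ∀ i, 0 < c i := by
  by_contra hcon
  push_neg at hcon
  obtain ⟨i₀, hi₀⟩ := hcon
  set S : Finset (Fin M) := Finset.univ.filter (fun i => c i ≤ 0) with hS
  have hi₀S : i₀ ∈ S := by simp [hS, hi₀]
  have hmemS : ∀ i, i ∈ S ↔ c i ≤ 0 := by intro i; simp [hS]
  have hnotS : ∀ j, j ∉ S → 0 < c j := by
    intro j hj
    by_contra h; exact hj ((hmemS j).mpr (not_lt.mp h))
  -- sum equations over S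
  have hsum : ∑ i ∈ S, d i * c i = ∑ i ∈ S, b i + ∑ i ∈ S, ∑ j, q i j * c j := by
    rw [← Finset.sum_add_distrib]
    exact Finset.sum_congr rfl fun i _ => hc i
  -- lower bound the production term
  have h1 : ∀ i ∈ S, ∑ j ∈ S, q i j * c j ≤ ∑ j, q i j * c j := by
    intro i _
    refine Finset.sum_le_sum_of_subset_of_nonneg (Finset.subset_univ S) ?_
    intro j _ hj
    exact mul_nonneg (hq i j) (le_of_lt (hnotS j hj))
  have h2 : ∑ j ∈ S, (d j - 1) * c j ≤ ∑ i ∈ S, ∑ j ∈ S, q i j * c j := by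
    rw [Finset.sum_comm]
    refine Finset.sum_le_sum fun j hj => ?_
    have hcj : c j ≤ 0 := (hmemS j).mp hj
    have hle : ∑ i ∈ S, q i j ≤ d j - 1 := by
      rw [← hcol j]
      exact Finset.sum_le_sum_of_subset_of_nonneg (Finset.subset_univ S)
        (fun i _ _ => hq i j)
    calc (d j - 1) * c j ≤ (∑ i ∈ S, q i j) * c j :=
          mul_le_mul_of_nonpos_right hle hcj
      _ = ∑ i ∈ S, q i j * c j := Finset.sum_mul _ _ _
  have h3 : ∑ j ∈ S, (d j - 1) * c j ≤ ∑ i ∈ S, ∑ j, q i j * c j :=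
    h2.trans (Finset.sum_le_sum h1)
  have h4 : ∑ i ∈ S, b i + ∑ j ∈ S, (d j - 1) * c j ≤ ∑ i ∈ S, d i * c i := by
    rw [hsum]; linarith
  have h5 : ∑ i ∈ S, b i ≤ ∑ i ∈ S, c i := by
    have : ∑ i ∈ S, (d i * c i - (d i - 1) * c i) = ∑ i ∈ S, c i := by
      exact Finset.sum_congr rfl fun i _ => by ring
    rw [← this, Finset.sum_sub_distrib]; linarith
  have hbpos : 0 < ∑ i ∈ S, b i :=
    Finset.sum_pos (fun i _ => hb i) ⟨i₀, hi₀S⟩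
  have hcneg : ∑ i ∈ S, c i ≤ 0 :=
    Finset.sum_nonpos fun i hi => (hmemS i).mp hi
  linarith

/-- Full result for the abstract system `d i * c i = b i + ∑ j, q i j * c j`. -/
lemma mp_aux_main (M : ℕ) (b d : Fin M → ℝ) (q : Fin M → Fin M → ℝ)
    (hb : ∀ i, 0 < b i) (hq : ∀ i j, 0 ≤ q i j) (hcol : ∀ j, ∑ i, q i j = d j - 1) :
    ∃! c : Fin M → ℝ, ∀ i, d i * c i = b i + ∑ j, q i j * c j := by
  -- linear map
  let L : (Fin M → ℝ) →ₗ[ℝ] (Fin M → ℝ) :=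
    { toFun := fun c i => d i * c i - ∑ j, q i j * c j
      map_add' := by
        intro x y; funext i
        simp only [Pi.add_apply, mul_add]
        rw [Finset.sum_add_distrib]; ring
      map_smul' := by
        intro r x; funext i
        simp only [Pi.smul_apply, smul_eq_mul, RingHom.id_apply]
        rw [show (∑ j, q i j * (r * x j)) = r * ∑ j, q i j * x j by
          rw [Finset.mul_sum]; exact Finset.sum_congr rfl fun j _ => by ring]
        ring }
  have hinj : Function.Injective L := by
    rw [← LinearMap.ker_eq_bot, LinearMap.ker_eq_bot']
    intro e he
    apply mp_aux_kernel M d q hq hcol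
    intro i
    have := congrFun he i
    simp only [L, LinearMap.coe_mk, AddHom.coe_mk, Pi.zero_apply] at this
    linarith
  have hsurj : Function.Surjective L :=
    (LinearMap.injective_iff_surjective).mp hinj
  obtain ⟨c, hc⟩ := hsurj b
  refine ⟨c, ?_, ?_⟩
  · intro i
    have := congrFun hc i
    simp only [L, LinearMap.coe_mk, AddHom.coe_mk] at this
    linarith
  · intro c' hc'
    apply hinj
    rw [hc]
    funext i
    simp only [L, LinearMap.coe_mk, AddHom.coe_mk]
    linarith [hc' i]

/-- Solvability and positivity of the generic modified Patankar linear system: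
for `τ ≥ 0`, positive right-hand side `b`, positive Patankar weights `σ`,
nonnegative production/destruction coefficients with `P i j = D j i`, the system
`c i = b i + τ (∑ j, P i j * c j / σ j − ∑ j, D i j * c i / σ i)` has a unique
solution, and any solution is entrywise positive. -/
theorem mp_linear_system_unique_positive
    (M : ℕ) (hM : 1 ≤ M) (τ : ℝ) (hτ : 0 ≤ τ)
    (b σ : Fin M → ℝ) (hb : ∀ i, 0 < b i) (hσ : ∀ i, 0 < σ i)
    (P D : Fin M → Fin M → ℝ)
    (hP : ∀ i j, 0 ≤ P i j) (hD : ∀ i j, 0 ≤ D i j)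
    (hPD : ∀ i j, P i j = D j i) :
    (∃! c : Fin M → ℝ, ∀ i,
        c i = b i + τ * (∑ j, P i j * c j / σ j - ∑ j, D i j * c i / σ i)) ∧
    (∀ c : Fin M → ℝ,
      (∀ i, c i = b i + τ * (∑ j, P i j * c j / σ j - ∑ j, D i j * c i / σ i)) →
      ∀ i, 0 < c i) := by
  set q : Fin M → Fin M → ℝ := fun i j => τ * P i j / σ j with hq_def
  set d : Fin M → ℝ := fun i => 1 + τ * (∑ j, D i j) / σ i with hd_def
  have hq : ∀ i j, 0 ≤ q i j := fun i j =>
    div_nonneg (mul_nonneg hτ (hP i j)) (le_of_lt (hσ j))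
  have hcol : ∀ j, ∑ i, q i j = d j - 1 := by
    intro j
    have : ∑ i, q i j = τ * (∑ i, P i j) / σ j := by
      rw [Finset.mul_sum, Finset.sum_div]
    rw [this]
    have hPsum : ∑ i, P i j = ∑ i, D j i := Finset.sum_congr rfl fun i _ => hPD i j
    rw [hPsum]
    simp [hd_def]
  -- equivalence of the two forms of the equation
  have hequiv : ∀ (c : Fin M → ℝ),
      (∀ i, c i = b i + τ * (∑ j, P i j * c j / σ j - ∑ j, D i j * c i / σ i)) ↔
      (∀ i, d i * c i = b i + ∑ j, q i j * c j) := by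
    intro c
    have key : ∀ i,
        (c i = b i + τ * (∑ j, P i j * c j / σ j - ∑ j, D i j * c i / σ i)) ↔
        (d i * c i = b i + ∑ j, q i j * c j) := by
      intro i
      have h1 : τ * ∑ j, P i j * c j / σ j = ∑ j, q i j * c j := by
        rw [Finset.mul_sum]
        exact Finset.sum_congr rfl fun j _ => by simp only [hq_def]; ring
      have h2 : τ * ∑ j, D i j * c i / σ i = (d i - 1) * c i := by
        have : ∑ j, D i j * c i / σ i = (∑ j, D i j) * (c i / σ i) := by
          rw [Finset.sum_mul]
          exact Finset.sum_congr rfl fun j _ => by ring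
        rw [this]
        simp only [hd_def]; ring
      constructor
      · intro h
        rw [mul_sub, h1, h2] at h
        linarith
      · intro h
        rw [mul_sub, h1, h2]
        linarith
    exact ⟨fun h i => (key i).mp (h i), fun h i => (key i).mpr (h i)⟩
  obtain ⟨c, hc, huniq⟩ := mp_aux_main M b d q hb hq hcol
  constructor
  · exact ⟨c, (hequiv c).mpr hc, fun c' hc' => huniq c' ((hequiv c').mp hc')⟩
  · intro c' hc' i
    exact mp_aux_pos M b d q hb hq hcol c' ((hequiv c').mp hc') i
end

section
/- Any solution c^{n+1} ∈ ℝ^M of the MPMS2 linear system satisfies Σ_{i=1}^M c_i^{n+1} = (1/4) Σ_{i=1}^M c_i^{n−2} + (3/4) Σ_{i=1}^M c_i^n. In particular, if Σ_{i=1}^M c_i^{n−2} = 1 and Σ_{i=1}^M c_i^n = 1, then Σ_{i=1}^M c_i^{n+1} = 1. -/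
/-- Conservativity of the MPMS2 scheme: any solution of the MPMS2 linear system
satisfies `∑ i, c^{n+1} i = (1/4) ∑ i, c^{n−2} i + (3/4) ∑ i, c^n i`; in particular
if both previous sums equal `1`, so does the new one. -/
theorem mpms2_conservative
    (M : ℕ) (hM : 1 ≤ M) (Δt : ℝ) (hΔt : 0 < Δt)
    (cnm2 cn cnp1 : Fin M → ℝ)
    (p d : Fin M → Fin M → ℝ)
    (hp : ∀ i j, 0 ≤ p i j) (hd : ∀ i j, 0 ≤ d i j)
    (hpd : ∀ i j, p i j = d j i)
    (σ : Fin M → ℝ) (hσ : ∀ i, 0 < σ i)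
    (hsys : ∀ i, cnp1 i = (1/4) * cnm2 i + (3/4) * cn i +
      (3/2) * Δt * (∑ j, p i j * cnp1 j / σ j - ∑ j, d i j * cnp1 i / σ i)) :
    (∑ i, cnp1 i = (1/4) * ∑ i, cnm2 i + (3/4) * ∑ i, cn i) ∧
    ((∑ i, cnm2 i = 1) → (∑ i, cn i = 1) → ∑ i, cnp1 i = 1) := by
  have key : ∑ i, cnp1 i = (1/4) * ∑ i, cnm2 i + (3/4) * ∑ i, cn i := by
    have hcancel : ∑ i, (∑ j, p i j * cnp1 j / σ j - ∑ j, d i j * cnp1 i / σ i) = 0 := by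
      rw [Finset.sum_sub_distrib]
      have : ∑ i, ∑ j, p i j * cnp1 j / σ j = ∑ i, ∑ j, d i j * cnp1 i / σ i := by
        rw [Finset.sum_comm]
        exact Finset.sum_congr rfl fun j _ => Finset.sum_congr rfl fun i _ => by
          rw [hpd]
      rw [this, sub_self]
    calc ∑ i, cnp1 i
        = ∑ i, ((1/4) * cnm2 i + (3/4) * cn i +
            (3/2) * Δt * (∑ j, p i j * cnp1 j / σ j - ∑ j, d i j * cnp1 i / σ i)) :=
          Finset.sum_congr rfl fun i _ => hsys i
      _ = (1/4) * ∑ i, cnm2 i + (3/4) * ∑ i, cn i +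
            (3/2) * Δt * ∑ i, (∑ j, p i j * cnp1 j / σ j - ∑ j, d i j * cnp1 i / σ i) := by
          simp only [Finset.sum_add_distrib, ← Finset.mul_sum]
      _ = (1/4) * ∑ i, cnm2 i + (3/4) * ∑ i, cn i := by rw [hcancel]; ring
  exact ⟨key, fun h1 h2 => by rw [key, h1, h2]; norm_num⟩
end

section
/- If c_i^{n−2} > 0 and c_i^n > 0 for every i = 1,…,M, then for every Δt > 0 the MPMS2 linear system has a unique solution c^{n+1} ∈ ℝ^M, and this solution satisfies c_i^{n+1} > 0 for every i; that is, the MPMS2 scheme is unconditionally positivity-preserving. -/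
/-!
Writing `a = 3Δt/2` and `b = c^{n-2}/4 + 3c^n/4`, the scheme reads `A c = b` with
`A = I + a (diag(∑ₖ dᵢₖ/σᵢ) - (pᵢⱼ/σⱼ))`. Since `pᵢⱼ ≥ 0`, the off-diagonal entries of `A`
are nonpositive, and since `pᵢⱼ = dⱼᵢ` (the production of `i` from `j` is the destruction of `j`
into `i`), every column of `A` sums to `1`. A matrix with these two properties is strictly
column diagonally dominant, hence invertible by Gershgorin, and it maps no vector with a
nonpositive entry to a positive vector: summing `(A c)ᵢ` over the indices `i` where `cᵢ ≤ 0`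
gives a nonpositive number.
-/

open Finset Matrix

section ZMatrix

variable {ι : Type*} [Fintype ι] {A : Matrix ι ι ℝ}

theorem Matrix.det_ne_zero_of_offDiag_nonpos_of_sum_col_pos [DecidableEq ι]
    (hoff : ∀ i j, i ≠ j → A i j ≤ 0) (hcol : ∀ j, 0 < ∑ i, A i j) : A.det ≠ 0 := by
  refine det_ne_zero_of_sum_col_lt_diag fun j => ?_
  have hsplit := add_sum_erase univ (fun i => A i j) (mem_univ j)
  have hoff_sum : ∑ i ∈ univ.erase j, A i j ≤ 0 :=
    sum_nonpos fun i hi => hoff i j (ne_of_mem_erase hi)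
  have hnorm : ∑ i ∈ univ.erase j, ‖A i j‖ = -∑ i ∈ univ.erase j, A i j := by
    rw [← sum_neg_distrib]
    exact sum_congr rfl fun i hi => abs_of_nonpos (hoff i j (ne_of_mem_erase hi))
  have hj := hcol j
  rw [hnorm, Real.norm_of_nonneg (by linarith)]
  linarith

theorem Matrix.pos_of_pos_mulVec_of_offDiag_nonpos_of_sum_col_nonneg
    (hoff : ∀ i j, i ≠ j → A i j ≤ 0) (hcol : ∀ j, 0 ≤ ∑ i, A i j) {c : ι → ℝ}
    (hc : ∀ i, 0 < (A *ᵥ c) i) (i : ι) : 0 < c i := by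
  classical
  by_contra! hi
  set S := univ.filter (c · ≤ 0)
  have hsum : ∑ k ∈ S, (A *ᵥ c) k = ∑ j, (∑ k ∈ S, A k j) * c j := by
    simp only [mulVec, dotProduct, sum_mul]
    exact sum_comm
  have hterm : ∀ j, (∑ k ∈ S, A k j) * c j ≤ 0 := by
    intro j
    by_cases hj : c j ≤ 0
    · have hjS : j ∈ S := by simpa [S] using hj
      have houtside : ∑ k ∈ Sᶜ, A k j ≤ 0 :=
        sum_nonpos fun k hk => hoff k j fun h => mem_compl.1 hk (h ▸ hjS)
      have := sum_add_sum_compl S fun k => A k j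
      exact mul_nonpos_of_nonneg_of_nonpos (by linarith [hcol j]) hj
    · have hjS : j ∉ S := by simpa [S] using hj
      exact mul_nonpos_of_nonpos_of_nonneg
        (sum_nonpos fun k hk => hoff k j fun h => hjS (h ▸ hk)) (by linarith)
  have hnonpos : ∑ k ∈ S, (A *ᵥ c) k ≤ 0 := hsum ▸ sum_nonpos fun j _ => hterm j
  exact hnonpos.not_gt (sum_pos (fun k _ => hc k) ⟨i, by simpa [S] using hi⟩)

end ZMatrix

section MPMS2

variable {ι : Type*} [Fintype ι] [DecidableEq ι]

noncomputable def mpms2Matrix (a : ℝ) (p d : ι → ι → ℝ) (σ : ι → ℝ) : Matrix ι ι ℝ :=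
  1 + a • (diagonal (fun i => ∑ k, d i k / σ i) - of fun i j => p i j / σ j)

theorem mpms2Matrix_mulVec_eq_iff (a : ℝ) (p d : ι → ι → ℝ) (σ b c : ι → ℝ) :
    mpms2Matrix a p d σ *ᵥ c = b ↔
      ∀ i, c i = b i + a * (∑ j, p i j * c j / σ j - ∑ j, d i j * c i / σ i) := by
  simp only [mpms2Matrix, add_mulVec, one_mulVec, smul_mulVec, sub_mulVec, mulVec_diagonal,
    funext_iff, Pi.add_apply, Pi.smul_apply, Pi.sub_apply, smul_eq_mul]
  refine forall_congr' fun i => ?_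
  have hloss : (∑ k, d i k / σ i) * c i = ∑ j, d i j * c i / σ i := by
    rw [sum_mul]
    exact sum_congr rfl fun j _ => div_mul_eq_mul_div _ _ _
  have hgain : ((of fun i j => p i j / σ j) *ᵥ c) i = ∑ j, p i j * c j / σ j :=
    sum_congr rfl fun j _ => div_mul_eq_mul_div _ _ _
  rw [hloss, hgain]
  constructor <;> intro h <;> linarith

theorem mpms2Matrix_offDiag_nonpos {a : ℝ} (ha : 0 ≤ a) {p : ι → ι → ℝ} (hp : ∀ i j, 0 ≤ p i j)
    (d : ι → ι → ℝ) {σ : ι → ℝ} (hσ : ∀ i, 0 ≤ σ i) {i j : ι} (hij : i ≠ j) :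
    mpms2Matrix a p d σ i j ≤ 0 := by
  simp only [mpms2Matrix, Matrix.add_apply, one_apply_ne hij, Matrix.smul_apply,
    Matrix.sub_apply, diagonal_apply_ne _ hij, of_apply, smul_eq_mul]
  have := mul_nonneg ha (div_nonneg (hp i j) (hσ j))
  linarith

theorem mpms2Matrix_sum_col (a : ℝ) {p d : ι → ι → ℝ} (hpd : ∀ i j, p i j = d j i)
    (σ : ι → ℝ) (j : ι) : ∑ i, mpms2Matrix a p d σ i j = 1 := by
  simp only [mpms2Matrix, Matrix.add_apply, Matrix.smul_apply, Matrix.sub_apply, of_apply,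
    smul_eq_mul, sum_add_distrib, mul_sub, sum_sub_distrib, one_apply, diagonal_apply,
    sum_ite_eq', mem_univ, if_true, ← mul_sum, ← sum_div, hpd, sub_self, add_zero]

end MPMS2

theorem mpms2_unconditionally_positive_general
    (M : ℕ) (Δt : ℝ) (hΔt : 0 < Δt)
    (cnm2 cn : Fin M → ℝ)
    (hcnm2 : ∀ i, 0 < cnm2 i) (hcn : ∀ i, 0 < cn i)
    (p d : Fin M → Fin M → ℝ)
    (hp : ∀ i j, 0 ≤ p i j)
    (hpd : ∀ i j, p i j = d j i)
    (σ : Fin M → ℝ) (hσ : ∀ i, 0 < σ i) :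
    (∃! c : Fin M → ℝ, ∀ i,
        c i = (1/4) * cnm2 i + (3/4) * cn i +
          (3/2) * Δt * (∑ j, p i j * c j / σ j - ∑ j, d i j * c i / σ i)) ∧
    (∀ c : Fin M → ℝ,
      (∀ i, c i = (1/4) * cnm2 i + (3/4) * cn i +
        (3/2) * Δt * (∑ j, p i j * c j / σ j - ∑ j, d i j * c i / σ i)) →
      ∀ i, 0 < c i) := by
  set A := mpms2Matrix ((3/2) * Δt) p d σ
  set b : Fin M → ℝ := fun i => (1/4) * cnm2 i + (3/4) * cn i
  suffices (∃! c, A *ᵥ c = b) ∧ ∀ c, A *ᵥ c = b → ∀ i, 0 < c i by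
    simpa only [A, b, mpms2Matrix_mulVec_eq_iff] using this
  have hoff : ∀ i j, i ≠ j → A i j ≤ 0 := fun i j =>
    mpms2Matrix_offDiag_nonpos (by positivity) hp d fun k => (hσ k).le
  have hcol : ∀ j, 0 < ∑ i, A i j := fun j => by
    rw [mpms2Matrix_sum_col _ hpd σ j]
    exact one_pos
  have hA : IsUnit A :=
    (isUnit_iff_isUnit_det A).2 (det_ne_zero_of_offDiag_nonpos_of_sum_col_pos hoff hcol).isUnit
  have hb : ∀ i, 0 < b i := fun i =>
    add_pos (mul_pos (by norm_num) (hcnm2 i)) (mul_pos (by norm_num) (hcn i))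
  obtain ⟨c, hc⟩ := mulVec_surjective_iff_isUnit.2 hA b
  exact ⟨⟨c, hc, fun c' hc' => mulVec_injective_iff_isUnit.2 hA (hc'.trans hc.symm)⟩,
    fun c hc => pos_of_pos_mulVec_of_offDiag_nonpos_of_sum_col_nonneg hoff
      (fun j => (hcol j).le) (hc ▸ hb)⟩

/-- Unconditional positivity of the MPMS2 scheme: for positive data `c^{n−2}, c^n`
and any `Δt > 0`, the MPMS2 linear system has a unique solution and this solution
is entrywise positive. -/
theorem mpms2_unconditionally_positive
    (M : ℕ) (hM : 1 ≤ M) (Δt : ℝ) (hΔt : 0 < Δt)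
    (cnm2 cn : Fin M → ℝ)
    (hcnm2 : ∀ i, 0 < cnm2 i) (hcn : ∀ i, 0 < cn i)
    (p d : Fin M → Fin M → ℝ)
    (hp : ∀ i j, 0 ≤ p i j) (hd : ∀ i j, 0 ≤ d i j)
    (hpd : ∀ i j, p i j = d j i)
    (σ : Fin M → ℝ) (hσ : ∀ i, 0 < σ i) :
    (∃! c : Fin M → ℝ, ∀ i,
        c i = (1/4) * cnm2 i + (3/4) * cn i +
          (3/2) * Δt * (∑ j, p i j * c j / σ j - ∑ j, d i j * c i / σ i)) ∧
    (∀ c : Fin M → ℝ,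
      (∀ i, c i = (1/4) * cnm2 i + (3/4) * cn i +
        (3/2) * Δt * (∑ j, p i j * c j / σ j - ∑ j, d i j * c i / σ i)) →
      ∀ i, 0 < c i) :=
  mpms2_unconditionally_positive_general M Δt hΔt cnm2 cn hcnm2 hcn p d hp hpd σ hσ
end

section
/- Any solution c^{n+1} ∈ ℝ^M of the MPMS3 linear system satisfies Σ_{i=1}^M c_i^{n+1} = (11/27) Σ_{i=1}^M c_i^{n−3} + (16/27) Σ_{i=1}^M c_i^n. In particular, if Σ_{i=1}^M c_i^{n−3} = 1 and Σ_{i=1}^M c_i^n = 1, then Σ_{i=1}^M c_i^{n+1} = 1. -/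
/-- Conservativity of the MPMS3 scheme: any solution of the MPMS3 linear system
satisfies `∑ i, c^{n+1} i = (11/27) ∑ i, c^{n−3} i + (16/27) ∑ i, c^n i`; in
particular if both previous sums equal `1`, so does the new one. -/
theorem mpms3_conservative
    (M : ℕ) (hM : 1 ≤ M) (Δt : ℝ) (hΔt : 0 < Δt)
    (cnm3 cn cnp1 : Fin M → ℝ)
    (pm3 dm3 pn dn : Fin M → Fin M → ℝ)
    (hpm3 : ∀ i j, 0 ≤ pm3 i j) (hdm3 : ∀ i j, 0 ≤ dm3 i j)
    (hpn : ∀ i j, 0 ≤ pn i j) (hdn : ∀ i j, 0 ≤ dn i j)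
    (hpdm3 : ∀ i j, pm3 i j = dm3 j i) (hpdn : ∀ i j, pn i j = dn j i)
    (σ : Fin M → ℝ) (hσ : ∀ i, 0 < σ i)
    (hsys : ∀ i, cnp1 i = (11/27) * cnm3 i + (16/27) * cn i +
      Δt * (∑ j, ((4/9) * pm3 i j + (16/9) * pn i j) * cnp1 j / σ j
          - ∑ j, ((4/9) * dm3 i j + (16/9) * dn i j) * cnp1 i / σ i)) :
    (∑ i, cnp1 i = (11/27) * ∑ i, cnm3 i + (16/27) * ∑ i, cn i) ∧
    ((∑ i, cnm3 i = 1) → (∑ i, cn i = 1) → ∑ i, cnp1 i = 1) := by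
  have key : ∑ i, cnp1 i = (11/27) * ∑ i, cnm3 i + (16/27) * ∑ i, cn i := by
    calc ∑ i, cnp1 i
        = ∑ i, ((11/27) * cnm3 i + (16/27) * cn i +
            Δt * (∑ j, ((4/9) * pm3 i j + (16/9) * pn i j) * cnp1 j / σ j
              - ∑ j, ((4/9) * dm3 i j + (16/9) * dn i j) * cnp1 i / σ i)) := by
          exact Finset.sum_congr rfl fun i _ => hsys i
      _ = (11/27) * ∑ i, cnm3 i + (16/27) * ∑ i, cn i := by
          rw [Finset.sum_add_distrib, Finset.sum_add_distrib, ← Finset.mul_sum,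
            ← Finset.mul_sum]
          have h0 : ∑ i, Δt * (∑ j, ((4/9) * pm3 i j + (16/9) * pn i j) * cnp1 j / σ j
              - ∑ j, ((4/9) * dm3 i j + (16/9) * dn i j) * cnp1 i / σ i) = 0 := by
            rw [← Finset.mul_sum]
            have : ∑ i, (∑ j, ((4/9) * pm3 i j + (16/9) * pn i j) * cnp1 j / σ j
                - ∑ j, ((4/9) * dm3 i j + (16/9) * dn i j) * cnp1 i / σ i) = 0 := by
              rw [Finset.sum_sub_distrib, sub_eq_zero, Finset.sum_comm]
              apply Finset.sum_congr rfl; intro j _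
              apply Finset.sum_congr rfl; intro i _
              rw [hpdm3 i j, hpdn i j]
            rw [this, mul_zero]
          rw [h0, add_zero]
  exact ⟨key, fun h1 h2 => by rw [key, h1, h2]; norm_num⟩
end

section
/- If c_i^{n−3} > 0 and c_i^n > 0 for every i = 1,…,M, then for every Δt > 0 the MPMS3 linear system has a unique solution c^{n+1} ∈ ℝ^M, and this solution satisfies c_i^{n+1} > 0 for every i; that is, the MPMS3 scheme is unconditionally positivity-preserving. -/
open Finset

lemma mpms3_aux_nonneg {M : ℕ} {Δt : ℝ} (hΔt : 0 < Δt)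
    (Q : Fin M → Fin M → ℝ) (hQ : ∀ i j, 0 ≤ Q i j)
    {σ : Fin M → ℝ} (hσ : ∀ i, 0 < σ i)
    {c b : Fin M → ℝ} (hb : ∀ i, 0 ≤ b i)
    (h : ∀ i, c i + Δt * (∑ j, Q i j * c i / σ i - ∑ j, Q j i * c j / σ j) = b i) :
    ∀ i, 0 ≤ c i := by
  by_contra hcon
  push_neg at hcon
  obtain ⟨i0, hi0⟩ := hcon
  set S : Finset (Fin M) := Finset.univ.filter (fun i => c i < 0) with hS
  set T : Finset (Fin M) := Finset.univ.filter (fun i => ¬ c i < 0) with hT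
  have hi0S : i0 ∈ S := by simp [hS, hi0]
  have hmemS : ∀ i ∈ S, c i < 0 := fun i hi => (Finset.mem_filter.mp hi).2
  have hmemT : ∀ i ∈ T, 0 ≤ c i := fun i hi => le_of_not_gt (Finset.mem_filter.mp hi).2
  have hsplit : ∀ f : Fin M → Fin M → ℝ, ∀ i : Fin M,
      ∑ j, f i j = ∑ j ∈ S, f i j + ∑ j ∈ T, f i j := by
    intro f i
    rw [hS, hT]
    exact (Finset.sum_filter_add_sum_filter_not Finset.univ _ _).symm
  have hsum : ∑ i ∈ S, b i = ∑ i ∈ S, c i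
      + Δt * ((∑ i ∈ S, ∑ j, Q i j * c i / σ i) - (∑ i ∈ S, ∑ j, Q j i * c j / σ j)) := by
    rw [← Finset.sum_congr rfl (fun i (_ : i ∈ S) => h i), Finset.sum_add_distrib,
      ← Finset.mul_sum, Finset.sum_sub_distrib]
  have h1 : ∑ i ∈ S, ∑ j, Q i j * c i / σ i
      = (∑ i ∈ S, ∑ j ∈ S, Q i j * c i / σ i) + ∑ i ∈ S, ∑ j ∈ T, Q i j * c i / σ i := by
    rw [← Finset.sum_add_distrib]
    exact Finset.sum_congr rfl fun i _ => hsplit (fun i j => Q i j * c i / σ i) i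
  have h2 : ∑ i ∈ S, ∑ j, Q j i * c j / σ j
      = (∑ i ∈ S, ∑ j ∈ S, Q j i * c j / σ j) + ∑ i ∈ S, ∑ j ∈ T, Q j i * c j / σ j := by
    rw [← Finset.sum_add_distrib]
    exact Finset.sum_congr rfl fun i _ => hsplit (fun i j => Q j i * c j / σ j) i
  have hdiag : ∑ i ∈ S, ∑ j ∈ S, Q i j * c i / σ i
      = ∑ i ∈ S, ∑ j ∈ S, Q j i * c j / σ j := Finset.sum_comm
  have hA1 : ∑ i ∈ S, ∑ j ∈ T, Q i j * c i / σ i ≤ 0 := by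
    apply Finset.sum_nonpos
    intro i hi
    apply Finset.sum_nonpos
    intro j _
    exact div_nonpos_of_nonpos_of_nonneg
      (mul_nonpos_of_nonneg_of_nonpos (hQ i j) (hmemS i hi).le) (hσ i).le
  have hA2 : 0 ≤ ∑ i ∈ S, ∑ j ∈ T, Q j i * c j / σ j := by
    apply Finset.sum_nonneg
    intro i _
    apply Finset.sum_nonneg
    intro j hj
    exact div_nonneg (mul_nonneg (hQ j i) (hmemT j hj)) (hσ j).le
  have hScneg : ∑ i ∈ S, c i < 0 := Finset.sum_neg hmemS ⟨i0, hi0S⟩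
  have hbS : 0 ≤ ∑ i ∈ S, b i := Finset.sum_nonneg fun i _ => hb i
  rw [hsum, h1, h2, hdiag] at hbS
  nlinarith [mul_nonneg hΔt.le (sub_nonneg.mpr (le_trans hA1 hA2))]
lemma mpms3_aux_pos {M : ℕ} {Δt : ℝ} (hΔt : 0 < Δt)
    (Q : Fin M → Fin M → ℝ) (hQ : ∀ i j, 0 ≤ Q i j)
    {σ : Fin M → ℝ} (hσ : ∀ i, 0 < σ i)
    {c b : Fin M → ℝ} (hb : ∀ i, 0 < b i) (hc0 : ∀ i, 0 ≤ c i)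
    (h : ∀ i, c i + Δt * (∑ j, Q i j * c i / σ i - ∑ j, Q j i * c j / σ j) = b i) :
    ∀ i, 0 < c i := by
  intro i
  have hB : ∑ j, Q i j * c i / σ i = c i * ∑ j, Q i j / σ i := by
    rw [Finset.mul_sum]
    exact Finset.sum_congr rfl fun j _ => by ring
  have hK : 0 ≤ ∑ j, Q i j / σ i :=
    Finset.sum_nonneg fun j _ => div_nonneg (hQ i j) (hσ i).le
  have hA : 0 ≤ ∑ j, Q j i * c j / σ j :=
    Finset.sum_nonneg fun j _ => div_nonneg (mul_nonneg (hQ j i) (hc0 j)) (hσ j).le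
  have hmain : c i * (1 + Δt * ∑ j, Q i j / σ i)
      = b i + Δt * ∑ j, Q j i * c j / σ j := by
    linear_combination h i - Δt * hB
  have hfac : 0 < 1 + Δt * ∑ j, Q i j / σ i := by nlinarith
  have hrhs : 0 < b i + Δt * ∑ j, Q j i * c j / σ j := by nlinarith [hb i]
  by_contra hci
  push_neg at hci
  nlinarith [mul_nonpos_of_nonpos_of_nonneg hci hfac.le]

/-- Unconditional positivity of the MPMS3 scheme: for positive data `c^{n−3}, c^n`
and any `Δt > 0`, the MPMS3 linear system has a unique solution and this solution
is entrywise positive. -/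
theorem mpms3_unconditionally_positive
    (M : ℕ) (hM : 1 ≤ M) (Δt : ℝ) (hΔt : 0 < Δt)
    (cnm3 cn : Fin M → ℝ)
    (hcnm3 : ∀ i, 0 < cnm3 i) (hcn : ∀ i, 0 < cn i)
    (pm3 dm3 pn dn : Fin M → Fin M → ℝ)
    (hpm3 : ∀ i j, 0 ≤ pm3 i j) (hdm3 : ∀ i j, 0 ≤ dm3 i j)
    (hpn : ∀ i j, 0 ≤ pn i j) (hdn : ∀ i j, 0 ≤ dn i j)
    (hpdm3 : ∀ i j, pm3 i j = dm3 j i) (hpdn : ∀ i j, pn i j = dn j i)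
    (σ : Fin M → ℝ) (hσ : ∀ i, 0 < σ i) :
    (∃! c : Fin M → ℝ, ∀ i,
        c i = (11/27) * cnm3 i + (16/27) * cn i +
          Δt * (∑ j, ((4/9) * pm3 i j + (16/9) * pn i j) * c j / σ j
              - ∑ j, ((4/9) * dm3 i j + (16/9) * dn i j) * c i / σ i)) ∧
    (∀ c : Fin M → ℝ,
      (∀ i, c i = (11/27) * cnm3 i + (16/27) * cn i +
        Δt * (∑ j, ((4/9) * pm3 i j + (16/9) * pn i j) * c j / σ j
            - ∑ j, ((4/9) * dm3 i j + (16/9) * dn i j) * c i / σ i)) →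
      ∀ i, 0 < c i) := by
  -- abbreviations
  set Q : Fin M → Fin M → ℝ := fun i j => (4/9) * dm3 i j + (16/9) * dn i j with hQdef
  set b : Fin M → ℝ := fun i => (11/27) * cnm3 i + (16/27) * cn i with hbdef
  have hQ : ∀ i j, 0 ≤ Q i j := fun i j =>
    add_nonneg (mul_nonneg (by norm_num) (hdm3 i j)) (mul_nonneg (by norm_num) (hdn i j))
  have hbpos : ∀ i, 0 < b i := fun i => by
    have := hcnm3 i; have := hcn i
    simp only [hbdef]; nlinarith
  -- the production sums in transposed form
  have hPQ : ∀ (c : Fin M → ℝ) (i : Fin M),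
      ∑ j, ((4/9) * pm3 i j + (16/9) * pn i j) * c j / σ j
        = ∑ j, Q j i * c j / σ j := by
    intro c i
    refine Finset.sum_congr rfl fun j _ => ?_
    rw [hpdm3, hpdn]
  have hDQ : ∀ (c : Fin M → ℝ) (i : Fin M),
      ∑ j, ((4/9) * dm3 i j + (16/9) * dn i j) * c i / σ i
        = ∑ j, Q i j * c i / σ i := fun c i => rfl
  -- equivalence of the system with the `g c = b` form
  have hEq : ∀ c : Fin M → ℝ,
      (∀ i, c i = (11/27) * cnm3 i + (16/27) * cn i +
        Δt * (∑ j, ((4/9) * pm3 i j + (16/9) * pn i j) * c j / σ j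
            - ∑ j, ((4/9) * dm3 i j + (16/9) * dn i j) * c i / σ i)) ↔
      (∀ i, c i + Δt * (∑ j, Q i j * c i / σ i - ∑ j, Q j i * c j / σ j) = b i) := by
    intro c
    constructor
    · intro h i
      have h1 := h i
      rw [hPQ c i, hDQ c i] at h1
      simp only [hbdef]
      linear_combination h1
    · intro h i
      have h1 := h i
      rw [hPQ c i, hDQ c i]
      simp only [hbdef] at h1
      linear_combination h1
  -- the linear operator
  let L : (Fin M → ℝ) →ₗ[ℝ] (Fin M → ℝ) :=
    { toFun := fun c i => c i + Δt * (∑ j, Q i j * c i / σ i - ∑ j, Q j i * c j / σ j)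
      map_add' := by
        intro x y
        funext i
        simp only [Pi.add_apply]
        have e1 : ∑ j, Q i j * (x i + y i) / σ i
            = ∑ j, (Q i j * x i / σ i + Q i j * y i / σ i) :=
          Finset.sum_congr rfl fun j _ => by ring
        have e2 : ∑ j, Q j i * (x j + y j) / σ j
            = ∑ j, (Q j i * x j / σ j + Q j i * y j / σ j) :=
          Finset.sum_congr rfl fun j _ => by ring
        rw [e1, e2, Finset.sum_add_distrib, Finset.sum_add_distrib]
        ring
      map_smul' := by
        intro a x
        funext i
        simp only [Pi.smul_apply, smul_eq_mul, RingHom.id_apply]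
        have e1 : ∑ j, Q i j * (a * x i) / σ i = a * ∑ j, Q i j * x i / σ i := by
          rw [Finset.mul_sum]
          exact Finset.sum_congr rfl fun j _ => by ring
        have e2 : ∑ j, Q j i * (a * x j) / σ j = a * ∑ j, Q j i * x j / σ j := by
          rw [Finset.mul_sum]
          exact Finset.sum_congr rfl fun j _ => by ring
        rw [e1, e2]
        ring }
  have hLapp : ∀ (c : Fin M → ℝ) (i : Fin M),
      L c i = c i + Δt * (∑ j, Q i j * c i / σ i - ∑ j, Q j i * c j / σ j) := fun c i => rfl
  -- injectivity
  have hinj : Function.Injective L := by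
    rw [← LinearMap.ker_eq_bot, LinearMap.ker_eq_bot']
    intro x hx
    have hx1 : ∀ i, x i + Δt * (∑ j, Q i j * x i / σ i - ∑ j, Q j i * x j / σ j) = 0 := by
      intro i
      have := congrFun hx i
      rw [hLapp] at this
      exact this
    have hx2 : ∀ i, (-x) i + Δt * (∑ j, Q i j * (-x) i / σ i
        - ∑ j, Q j i * (-x) j / σ j) = 0 := by
      intro i
      have h0 : L (-x) = 0 := by rw [map_neg, hx, neg_zero]
      have := congrFun h0 i
      rw [hLapp] at this
      exact this
    have hnn := mpms3_aux_nonneg hΔt Q hQ hσ (fun i => le_refl (0:ℝ)) hx1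
    have hnp := mpms3_aux_nonneg hΔt Q hQ hσ (fun i => le_refl (0:ℝ)) hx2
    funext i
    have := hnp i
    simp only [Pi.neg_apply] at this
    have := hnn i
    exact le_antisymm (by simpa using hnp i) (hnn i)
  have hsurj : Function.Surjective L := LinearMap.injective_iff_surjective.mp hinj
  obtain ⟨c₀, hc₀⟩ := hsurj b
  have hc₀' : ∀ i, c₀ i + Δt * (∑ j, Q i j * c₀ i / σ i - ∑ j, Q j i * c₀ j / σ j) = b i := by
    intro i
    have := congrFun hc₀ i
    rw [hLapp] at this
    exact this
  constructor
  · refine ⟨c₀, (hEq c₀).mpr hc₀', ?_⟩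
    intro c hc
    have hc' := (hEq c).mp hc
    apply hinj
    rw [hc₀]
    funext i
    rw [hLapp]
    exact hc' i
  · intro c hc
    have hc' := (hEq c).mp hc
    have hnn := mpms3_aux_nonneg hΔt Q hQ hσ (fun i => (hbpos i).le) hc'
    exact mpms3_aux_pos hΔt Q hQ hσ hbpos hnn hc'
end

section
/- Let f : ℝ → ℝ be twice continuously differentiable in a neighborhood of t with f(t) > 0 and f'(t) ≠ 0, and let s, r ∈ ℝ. Then f(t−h)^s · f(t−2h)^r · f(t−3h)^{1−r−s} − f(t) = O(h²) as h → 0⁺ if and only if r + 2s − 3 = 0. -/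
/-! The weight `σ(h) = f(t-h)^s f(t-2h)^r f(t-3h)^(1-r-s)` is `C²` near `0`, with `σ(0) = f(t)`
(the exponents sum to one) and `σ'(0) = f'(t)(r + 2s - 3)`. By second-order Taylor,
`σ(h) - f(t) = σ'(0) h + O(h²)`, and a linear term `c h` is `O(h²)` as `h → 0⁺` only if `c = 0`. -/

open Filter Asymptotics Topology

section TaylorBigO

variable {E : Type*} [NormedAddCommGroup E] [NormedSpace ℝ E]

theorem isBigO_sub_sq_of_hasDerivAt_of_isBigO {g g' : ℝ → E} {x : ℝ}
    (hg : ∀ᶠ y in 𝓝 x, HasDerivAt g (g' y) y) (hg' : g' =O[𝓝 x] (· - x)) :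
    (fun y => g y - g x) =O[𝓝 x] fun y => (y - x) ^ 2 := by
  obtain ⟨C, hC, hCg'⟩ := hg'.exists_nonneg
  obtain ⟨ε, hε, hball⟩ := Metric.eventually_nhds_iff_ball.1 (hg.and hCg'.bound)
  refine .of_bound C (eventually_of_mem (Metric.ball_mem_nhds x hε) fun y hy => ?_)
  have hseg : segment ℝ x y ⊆ Metric.ball x ε :=
    (convex_ball x ε).segment_subset (Metric.mem_ball_self hε) hy
  have hbound : ∀ z ∈ segment ℝ x y, ‖g' z‖ ≤ C * ‖y - x‖ := fun z hz =>
    (hball z (hseg hz)).2.trans (by gcongr; exact norm_sub_le_of_mem_segment hz)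
  calc ‖g y - g x‖ ≤ C * ‖y - x‖ * ‖y - x‖ :=
        (convex_segment x y).norm_image_sub_le_of_norm_hasDerivWithin_le
          (fun z hz => (hball z (hseg hz)).1.hasDerivWithinAt) hbound
          (left_mem_segment ℝ x y) (right_mem_segment ℝ x y)
    _ = C * ‖(y - x) ^ 2‖ := by rw [norm_pow, mul_assoc, sq]

theorem ContDiffAt.isBigO_sub_sub_smul_deriv {F : ℝ → E} {x : ℝ} (hF : ContDiffAt ℝ 2 F x) :
    (fun y => F y - F x - (y - x) • deriv F x) =O[𝓝 x] fun y => (y - x) ^ 2 := by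
  have hderiv : ∀ᶠ y in 𝓝 x, HasDerivAt F (deriv F y) y :=
    hF.eventually (by simp) |>.mono fun y hy => (hy.differentiableAt two_ne_zero).hasDerivAt
  have hderiv' : (deriv F · - deriv F x) =O[𝓝 x] (· - x) :=
    ((hF.derivWithin (m := 1) (by norm_num)).differentiableAt one_ne_zero).isBigO_sub
  have := isBigO_sub_sq_of_hasDerivAt_of_isBigO (g := fun y => F y - (y - x) • deriv F x)
    (hderiv.mono fun y hy => hy.sub (((hasDerivAt_id y).sub_const x).smul_const (deriv F x)))
    (by simpa using hderiv')
  simpa [sub_right_comm] using this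

theorem isBigO_smul_const_sq_nhdsGT_iff {c : E} :
    (fun h : ℝ => h • c) =O[𝓝[>] 0] (fun h => h ^ 2) ↔ c = 0 := by
  refine ⟨fun hO => ?_, fun hc => by simp [hc, isBigO_zero]⟩
  obtain ⟨C, hC⟩ := hO.bound
  have hle : ∀ᶠ h in 𝓝[>] (0 : ℝ), ‖c‖ ≤ C * h := by
    filter_upwards [hC, self_mem_nhdsWithin] with h hh (hpos : 0 < h)
    rw [norm_smul, norm_pow, Real.norm_of_nonneg hpos.le, sq, ← mul_assoc] at hh
    exact le_of_mul_le_mul_right (by linarith) hpos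
  have hlim : Tendsto (fun h : ℝ => C * h) (𝓝[>] 0) (𝓝 0) := by
    simpa using ((tendsto_id (x := 𝓝 (0 : ℝ))).const_mul C).mono_left nhdsWithin_le_nhds
  exact norm_le_zero_iff.1 (ge_of_tendsto hlim hle)

end TaylorBigO

noncomputable def patankarWeight (f : ℝ → ℝ) (t s r h : ℝ) : ℝ :=
  f (t - h) ^ s * f (t - 2 * h) ^ r * f (t - 3 * h) ^ (1 - r - s)

section PatankarWeight

variable {f : ℝ → ℝ} {t : ℝ} (s r : ℝ)

theorem rpow_mul_rpow_mul_rpow_one_sub {a : ℝ} (ha : 0 < a) :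
    a ^ s * a ^ r * a ^ (1 - r - s) = a := by
  rw [← Real.rpow_add ha, ← Real.rpow_add ha, show s + r + (1 - r - s) = 1 by ring,
    Real.rpow_one]

theorem patankarWeight_zero (hft : 0 < f t) : patankarWeight f t s r 0 = f t := by
  simpa [patankarWeight] using rpow_mul_rpow_mul_rpow_one_sub s r hft

-- `f t ^ p / f t` instead of `f t ^ (p - 1)`, so that the three factors of the weight recombine
-- through `rpow_mul_rpow_mul_rpow_one_sub`.
theorem hasDerivAt_rpow_comp_sub_mul {f' : ℝ} (hf : HasDerivAt f f' t) (hft : f t ≠ 0)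
    (k p : ℝ) :
    HasDerivAt (fun h => f (t - k * h) ^ p) (-(k * p * f') * f t ^ p / f t) 0 := by
  have hlin : HasDerivAt (fun h : ℝ => t - k * h) (-k) 0 := by
    simpa using ((hasDerivAt_id (0 : ℝ)).const_mul k).const_sub t
  have hcomp : HasDerivAt (fun h => f (t - k * h)) (f' * -k) 0 := hf.comp_of_eq 0 hlin (by simp)
  convert hcomp.rpow_const (p := p) (.inl (by simpa using hft)) using 1
  rw [mul_zero, sub_zero, Real.rpow_sub_one hft]
  ring

theorem hasDerivAt_patankarWeight {f' : ℝ} (hf : HasDerivAt f f' t) (hft : 0 < f t) :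
    HasDerivAt (patankarWeight f t s r) (f' * (r + 2 * s - 3)) 0 := by
  have h1 := hasDerivAt_rpow_comp_sub_mul hf hft.ne' 1 s
  simp only [one_mul] at h1
  refine ((h1.fun_mul (hasDerivAt_rpow_comp_sub_mul hf hft.ne' 2 r)).fun_mul
    (hasDerivAt_rpow_comp_sub_mul hf hft.ne' 3 (1 - r - s))).congr_deriv ?_
  simp only [mul_zero, sub_zero]
  field_simp
  linear_combination (-f' * (s + 2 * r + 3 * (1 - r - s))) * rpow_mul_rpow_mul_rpow_one_sub s r hft

theorem contDiffAt_patankarWeight (hf : ContDiffAt ℝ 2 f t) (hft : f t ≠ 0) :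
    ContDiffAt ℝ 2 (patankarWeight f t s r) 0 := by
  have hcomp (k p : ℝ) : ContDiffAt ℝ 2 (fun h => f (t - k * h) ^ p) 0 := by
    have hlin : ContDiffAt ℝ 2 (fun h : ℝ => t - k * h) 0 := by fun_prop
    exact ((show ContDiffAt ℝ 2 f (t - k * 0) by simpa using hf).comp 0 hlin).rpow_const_of_ne
      (by simpa using hft)
  have := ((hcomp 1 s).mul (hcomp 2 r)).mul (hcomp 3 (1 - r - s))
  simp only [one_mul] at this
  exact this

end PatankarWeight

/-- Characterization of the exponents of the second-order Patankar weight: for `f`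
twice continuously differentiable near `t` with `f t > 0` and `f'(t) ≠ 0`,
`f(t−h)^s · f(t−2h)^r · f(t−3h)^{1−r−s} − f(t) = O(h²)` as `h → 0⁺`
if and only if `r + 2s − 3 = 0`. -/
theorem mpms2_weight_order_iff
    (f : ℝ → ℝ) (t : ℝ) (hf : ContDiffAt ℝ 2 f t) (hft : 0 < f t)
    (hft' : deriv f t ≠ 0) (s r : ℝ) :
    ((fun h : ℝ =>
        f (t - h) ^ s * f (t - 2*h) ^ r * f (t - 3*h) ^ (1 - r - s) - f t)
      =O[𝓝[>] (0:ℝ)] fun h : ℝ => h ^ 2) ↔ r + 2*s - 3 = 0 := by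
  set σ := patankarWeight f t s r
  set c := deriv f t * (r + 2 * s - 3)
  have hσ' : HasDerivAt σ c 0 :=
    hasDerivAt_patankarWeight s r (hf.differentiableAt two_ne_zero).hasDerivAt hft
  have hremainder : (fun h => σ h - f t - h * c) =O[𝓝[>] 0] fun h => h ^ 2 := by
    simpa [σ, patankarWeight_zero s r hft, hσ'.deriv] using
      (contDiffAt_patankarWeight s r hf hft.ne').isBigO_sub_sub_smul_deriv.mono nhdsWithin_le_nhds
  calc _ ↔ (fun h => (σ h - f t - h * c) + h * c) =O[𝓝[>] 0] fun h => h ^ 2 := by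
        simp only [sub_add_cancel]; rfl
    _ ↔ (fun h : ℝ => h • c) =O[𝓝[>] 0] fun h => h ^ 2 := hremainder.add_iff_right
    _ ↔ c = 0 := isBigO_smul_const_sq_nhdsGT_iff
    _ ↔ r + 2 * s - 3 = 0 := by simp [c, hft']
end

section
/- Let f : ℝ → ℝ be three times continuously differentiable in a neighborhood of t with f(t) > 0, let s ∈ ℝ, and set r = −3s + 6 and p = 3s − 8. Then, as h → 0⁺, f(t−h)^s · f(t−2h)^r · f(t−3h)^p · f(t−4h)^{1−r−s−p} = f(t) + O(h³), where the powers are real powers of positive reals. -/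
/-! Taking logarithms, the weight equals `f t * exp ψ(h)` with
`ψ(h) = ∑ aⱼ (log f(t - kⱼh) - log f t)`, because the exponents `aⱼ` sum to `1`. The relations
`r = -3s + 6`, `p = 3s - 8` say exactly that the moments `∑ aⱼ kⱼ` and `∑ aⱼ kⱼ²` vanish, so in the
Taylor expansion of `log ∘ f` to third order the terms of order `h` and `h²` of `ψ` cancel and
`ψ = O(h³)`; finally `exp ψ - 1 = O(ψ)`. -/

open Filter Asymptotics Topology

open scoped Nat

section Consistency

variable {E : Type*} [NormedAddCommGroup E] [NormedSpace ℝ E]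

theorem ContDiffAt.exists_isLittleO_sub_taylorWithinEval {g : ℝ → E} {t : ℝ} {n : ℕ}
    (hg : ContDiffAt ℝ n g t) :
    ∃ s : Set ℝ, (fun x ↦ g x - taylorWithinEval g n s t x) =o[𝓝 t] fun x ↦ (x - t) ^ n := by
  obtain ⟨u, hu, hgu⟩ := hg.contDiffOn le_rfl (by simp)
  obtain ⟨ε, hε, hball⟩ := Metric.mem_nhds_iff.1 hu
  refine ⟨Metric.ball t ε, ?_⟩
  simpa [nhdsWithin_eq_nhds.2 (Metric.ball_mem_nhds t hε)] using
    taylor_isLittleO (convex_ball t ε) (Metric.mem_ball_self hε) (hgu.mono hball)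

theorem sum_smul_taylorWithinEval_sub {ι : Type*} (S : Finset ι) (a κ : ι → ℝ) {n : ℕ}
    (hmom : ∀ i ∈ Finset.Icc 1 n, ∑ j ∈ S, a j * κ j ^ i = 0)
    (g : ℝ → E) (s : Set ℝ) (t h : ℝ) :
    ∑ j ∈ S, a j • (taylorWithinEval g (n + 1) s t (t + κ j * h) - g t) =
      (((n + 1)! : ℝ)⁻¹ * h ^ (n + 1) * ∑ j ∈ S, a j * κ j ^ (n + 1)) •
        iteratedDerivWithin (n + 1) g s t := by
  have hcoeff : ∀ k, ∑ j ∈ S, a j * (((k + 1)! : ℝ)⁻¹ * (t + κ j * h - t) ^ (k + 1)) =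
      ((k + 1)! : ℝ)⁻¹ * h ^ (k + 1) * ∑ j ∈ S, a j * κ j ^ (k + 1) := by
    intro k
    rw [Finset.mul_sum]
    refine Finset.sum_congr rfl fun j _ ↦ ?_
    ring
  simp_rw [taylor_within_apply, Finset.sum_range_succ' _ (n + 1), pow_zero, mul_one,
    Nat.factorial_zero, Nat.cast_one, inv_one, one_smul, iteratedDerivWithin_zero,
    add_sub_cancel_right, Finset.smul_sum, smul_smul]
  rw [Finset.sum_comm, Finset.sum_range_succ]
  simp_rw [← Finset.sum_smul, hcoeff]
  rw [Finset.sum_eq_zero, zero_add]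
  intro k hk
  rw [hmom (k + 1) (by simp at hk ⊢; omega), mul_zero, zero_smul]

theorem ContDiffAt.isBigO_sum_smul_sub_of_moments {g : ℝ → E} {t : ℝ} {n : ℕ}
    (hg : ContDiffAt ℝ (n + 1) g t) {ι : Type*} (S : Finset ι) (a κ : ι → ℝ)
    (hmom : ∀ i ∈ Finset.Icc 1 n, ∑ j ∈ S, a j * κ j ^ i = 0) :
    (fun h ↦ ∑ j ∈ S, a j • (g (t + κ j * h) - g t)) =O[𝓝 0] fun h ↦ h ^ (n + 1) := by
  obtain ⟨s, hs⟩ := ContDiffAt.exists_isLittleO_sub_taylorWithinEval (n := n + 1)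
    (by exact_mod_cast hg)
  have hremainder : ∀ j, (fun h ↦ g (t + κ j * h) - taylorWithinEval g (n + 1) s t (t + κ j * h))
      =O[𝓝 0] fun h ↦ h ^ (n + 1) := by
    intro j
    have hnode : Tendsto (fun h ↦ t + κ j * h) (𝓝 0) (𝓝 t) :=
      (by fun_prop : Continuous fun h : ℝ ↦ t + κ j * h).tendsto' 0 t (by simp)
    refine (hs.isBigO.comp_tendsto hnode).trans ?_
    simpa [Function.comp_def, mul_pow] using
      (isBigO_refl (fun h : ℝ ↦ h ^ (n + 1)) (𝓝 0)).const_mul_left (κ j ^ (n + 1))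
  have hsplit : ∀ h, ∑ j ∈ S, a j • (g (t + κ j * h) - g t) =
      ∑ j ∈ S, a j • (g (t + κ j * h) - taylorWithinEval g (n + 1) s t (t + κ j * h)) +
        ∑ j ∈ S, a j • (taylorWithinEval g (n + 1) s t (t + κ j * h) - g t) := by
    intro h
    rw [← Finset.sum_add_distrib]
    simp_rw [← smul_add, sub_add_sub_cancel]
  simp_rw [hsplit, sum_smul_taylorWithinEval_sub S a κ hmom]
  refine (IsBigO.fun_sum fun j _ ↦ (hremainder j).const_smul_left (a j)).add ?_
  refine isBigO_of_le' (c := ‖((n + 1)! : ℝ)⁻¹ * ∑ j ∈ S, a j * κ j ^ (n + 1)‖ *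
    ‖iteratedDerivWithin (n + 1) g s t‖) _ fun h ↦ ?_
  rw [norm_smul, norm_mul, norm_mul, norm_mul]
  exact le_of_eq (by ring)

end Consistency

theorem Real.isBigO_exp_sub_one_of_tendsto {α : Type*} {l : Filter α} {ψ : α → ℝ}
    (hψ : Tendsto ψ l (𝓝 0)) : (fun x ↦ Real.exp (ψ x) - 1) =O[l] ψ := by
  simpa [Function.comp_def] using (Real.hasDerivAt_exp 0).isBigO_sub.comp_tendsto hψ

theorem Real.prod_rpow_eq_mul_exp_sum {ι : Type*} (S : Finset ι) {x a : ι → ℝ} {c : ℝ}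
    (hx : ∀ j ∈ S, 0 < x j) (hc : 0 < c) (ha : ∑ j ∈ S, a j = 1) :
    ∏ j ∈ S, x j ^ a j = c * Real.exp (∑ j ∈ S, a j * (Real.log (x j) - Real.log c)) := by
  simp_rw [mul_sub, Finset.sum_sub_distrib, ← Finset.sum_mul, ha, one_mul, Real.exp_sub,
    Real.exp_log hc, mul_div_cancel₀ _ hc.ne', Real.exp_sum]
  exact Finset.prod_congr rfl fun j hj ↦ by rw [Real.rpow_def_of_pos (hx j hj), mul_comm]

/-- Taylor expansion of the third-order Patankar weight: for `f` three times
continuously differentiable near `t` with `f t > 0`, and exponents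
`r = −3s + 6`, `p = 3s − 8`, as `h → 0⁺`,
`f(t−h)^s · f(t−2h)^r · f(t−3h)^p · f(t−4h)^{1−r−s−p} = f(t) + O(h³)`,
with real powers of positive reals. -/
theorem mpms3_weight_taylor
    (f : ℝ → ℝ) (t : ℝ) (hf : ContDiffAt ℝ 3 f t) (hft : 0 < f t)
    (s r p : ℝ) (hr : r = -3*s + 6) (hp : p = 3*s - 8) :
    (fun h : ℝ =>
        f (t - h) ^ s * f (t - 2*h) ^ r * f (t - 3*h) ^ p
          * f (t - 4*h) ^ (1 - r - s - p) - f t)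
      =O[𝓝[>] (0:ℝ)] fun h : ℝ => h ^ 3 := by
  set a : Fin 4 → ℝ := ![s, r, p, 1 - r - s - p]
  set κ : Fin 4 → ℝ := ![-1, -2, -3, -4]
  set ψ := fun h ↦ ∑ j, a j * (Real.log (f (t + κ j * h)) - Real.log (f t))
  have hψ : ψ =O[𝓝 0] fun h ↦ h ^ 3 := by
    refine ContDiffAt.isBigO_sum_smul_sub_of_moments (n := 2) (hf.log hft.ne') _ a κ ?_
    intro i hi
    obtain ⟨hi₁, hi₂⟩ := Finset.mem_Icc.1 hi
    interval_cases i <;> simp [a, κ, Fin.sum_univ_four, hr, hp] <;> ring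
  have hpos : ∀ j, ∀ᶠ h in 𝓝 (0 : ℝ), 0 < f (t + κ j * h) := fun j ↦
    (hf.continuousAt.tendsto.comp ((by fun_prop : Continuous fun h : ℝ ↦ t + κ j * h).tendsto'
      0 t (by simp))).eventually (eventually_gt_nhds hft)
  have hweight : (fun h : ℝ ↦ f (t - h) ^ s * f (t - 2*h) ^ r * f (t - 3*h) ^ p
      * f (t - 4*h) ^ (1 - r - s - p) - f t) =ᶠ[𝓝 0] fun h ↦ f t * (Real.exp (ψ h) - 1) := by
    filter_upwards [eventually_all.2 hpos] with h hposh
    rw [mul_sub_one, ← Real.prod_rpow_eq_mul_exp_sum _ (fun j _ ↦ hposh j) hft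
      (by simp [a, Fin.sum_univ_four]; ring)]
    simp [a, κ, Fin.prod_univ_four, ← sub_eq_add_neg]
  have hexp := Real.isBigO_exp_sub_one_of_tendsto
    (hψ.trans_tendsto ((continuous_pow 3).tendsto' 0 0 (by simp)))
  exact ((hexp.trans hψ).const_mul_left (f t)).congr' hweight.symm .rfl |>.mono nhdsWithin_le_nhds
end

section
/- Let f : ℝ → ℝ be four times continuously differentiable in a neighborhood of t. Then, as h → 0⁺, (11/27) f(t − 3h) + (16/27) f(t) + h ( (4/9) f'(t − 3h) + (16/9) f'(t) ) − f(t + h) = O(h⁴). -/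
open Filter Asymptotics Topology Set

theorem Asymptotics.IsBigO.comp_const_add_mul {𝕜 E : Type*} [NormedField 𝕜] [Norm E]
    {g : 𝕜 → E} {x₀ : 𝕜} {n : ℕ} (hg : g =O[𝓝 x₀] fun x ↦ (x - x₀) ^ n) (c : 𝕜) :
    (fun h ↦ g (x₀ + c * h)) =O[𝓝 0] fun h ↦ h ^ n := by
  have hk : Tendsto (fun h : 𝕜 ↦ x₀ + c * h) (𝓝 0) (𝓝 x₀) := by
    have hcont : Continuous fun h : 𝕜 ↦ x₀ + c * h := by fun_prop
    simpa using hcont.tendsto 0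
  refine (hg.comp_tendsto hk).trans ?_
  simpa only [Function.comp_def, add_sub_cancel_left, mul_pow] using
    isBigO_const_mul_self (c ^ n) (fun h : 𝕜 ↦ h ^ n) (𝓝 0)

section
variable {E : Type*} [NormedAddCommGroup E] [NormedSpace ℝ E]

theorem taylorWithinEval_of_isOpen {f : ℝ → E} {n : ℕ} {s : Set ℝ} {x₀ : ℝ}
    (hs : IsOpen s) (hx₀ : x₀ ∈ s) :
    taylorWithinEval f n s x₀ = taylorWithinEval f n univ x₀ := by
  ext x
  simp only [taylor_within_apply, iteratedDerivWithin_of_isOpen hs hx₀, iteratedDerivWithin_univ]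

-- Peano's `o((x - x₀)^(n+1))` remainder of degree `n + 1`, plus the top Taylor term.
theorem ContDiffAt.isBigO_sub_taylorWithinEval {f : ℝ → E} {x₀ : ℝ} {n : ℕ}
    (hf : ContDiffAt ℝ (n + 1) f x₀) :
    (fun x ↦ f x - taylorWithinEval f n univ x₀ x) =O[𝓝 x₀] fun x ↦ (x - x₀) ^ (n + 1) := by
  obtain ⟨u, hu, hfu⟩ := hf.contDiffOn le_rfl (by simp)
  obtain ⟨ε, hε, hball⟩ := Metric.mem_nhds_iff.1 hu
  have hx₀ : x₀ ∈ Metric.ball x₀ ε := Metric.mem_ball_self hε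
  have hlittle := taylor_isLittleO (convex_ball x₀ ε) hx₀ (n := n + 1)
    (by exact_mod_cast hfu.mono hball)
  rw [nhdsWithin_eq_nhds.2 (Metric.isOpen_ball.mem_nhds hx₀),
    taylorWithinEval_of_isOpen Metric.isOpen_ball hx₀] at hlittle
  have hterm : (fun x ↦ (((n + 1 : ℝ) * n.factorial)⁻¹ * (x - x₀) ^ (n + 1)) •
      iteratedDerivWithin (n + 1) f univ x₀) =O[𝓝 x₀] fun x ↦ (x - x₀) ^ (n + 1) := by
    simpa using (isBigO_const_mul_self _ (fun x ↦ (x - x₀) ^ (n + 1)) _).smul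
      (isBigO_const_const (iteratedDerivWithin (n + 1) f univ x₀) (one_ne_zero : (1 : ℝ) ≠ 0) _)
  refine (hlittle.isBigO.add hterm).congr_left fun x ↦ ?_
  rw [taylorWithinEval_succ]
  abel

end

/-- Local consistency (third-order accuracy) of the explicit SSP multistep method
`u^{n+1} = (11/27) u^{n−3} + (16/27) u^n + Δt ((4/9) L(u^{n−3}) + (16/9) L(u^n))`:
for `f` four times continuously differentiable near `t`, as `h → 0⁺`,
`(11/27) f(t−3h) + (16/27) f(t) + h ((4/9) f'(t−3h) + (16/9) f'(t)) − f(t+h) = O(h⁴)`. -/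
theorem ssp_ms3_consistency
    (f : ℝ → ℝ) (t : ℝ) (hf : ContDiffAt ℝ 4 f t) :
    (fun h : ℝ =>
        (11/27) * f (t - 3*h) + (16/27) * f t
          + h * ((4/9) * deriv f (t - 3*h) + (16/9) * deriv f t) - f (t + h))
      =O[𝓝[>] (0:ℝ)] fun h : ℝ => h ^ 4 := by
  have hf' : ContDiffAt ℝ (2 + 1) (deriv f) t := hf.derivWithin (by norm_num)
  have hf_rem := ContDiffAt.isBigO_sub_taylorWithinEval (n := 3) hf
  have hf'_rem := hf'.isBigO_sub_taylorWithinEval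
  have hback := hf_rem.comp_const_add_mul (-3)
  have hfwd := hf_rem.comp_const_add_mul 1
  have hderiv := ((isBigO_refl (fun h : ℝ ↦ h) _).mul (hf'_rem.comp_const_add_mul (-3))).congr_right
    fun h ↦ (pow_succ' h 3).symm
  refine ((((hback.const_mul_left (11/27)).add (hderiv.const_mul_left (4/9))).sub hfwd).mono
    nhdsWithin_le_nhds).congr_left fun h ↦ ?_
  -- The method is exact on cubics, so the Taylor polynomials cancel.
  simp only [taylor_within_apply, Finset.sum_range_succ, Finset.sum_range_zero,
    iteratedDerivWithin_univ, ← iteratedDeriv_succ', iteratedDeriv_zero, iteratedDeriv_one]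
  norm_num [Nat.factorial, ← sub_eq_add_neg]
  ring
end

section
/- Let M ≥ 1, let P_{ij}, D_{ij} ≥ 0 (1 ≤ i,j ≤ M) and A_i ∈ ℝ be fixed, and let δ > 0. Suppose that for all sufficiently small h > 0 there are vectors y(h), σ(h) ∈ ℝ^M with δ ≤ y_i(h) ≤ 1/δ for all i, such that σ_i(h) − y_i(h) = O(h²) as h → 0⁺ and y satisfies y_i(h) = A_i + (3/2) h ( Σ_j P_{ij} y_j(h)/σ_j(h) − Σ_j D_{ij} y_i(h)/σ_i(h) ) for every i. Then y_i(h) = A_i + (3/2) h ( Σ_j P_{ij} − Σ_j D_{ij} ) + O(h³) as h → 0⁺, for every i. -/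
/-!
Since `y ≥ δ` and `σ - y → 0`, the weights `σ` stay above `δ / 2`, so the Patankar factors
satisfy `y_j / σ_j = 1 + O(h²)`. Subtracting the explicit step from the Patankar system leaves
`(3/2) h` times a combination of these `O(h²)` defects, which is `O(h³)`.
-/

open Filter Asymptotics Topology

section
variable {α : Type*} {l : Filter α}

lemma Asymptotics.isBigO_inv_one_of_eventually_ge {σ : α → ℝ} {c : ℝ} (hc : 0 < c)
    (hσ : ∀ᶠ x in l, c ≤ σ x) : (fun x => (σ x)⁻¹) =O[l] fun _ => (1 : ℝ) := by
  refine (isBoundedUnder_of_eventually_le (a := c⁻¹) ?_).isBigO_one ℝ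
  filter_upwards [hσ] with x hx
  rw [norm_inv, Real.norm_of_nonneg (hc.le.trans hx)]
  exact inv_anti₀ hc hx

lemma Asymptotics.isBigO_div_sub_one {y σ k : α → ℝ} {δ : ℝ} (hδ : 0 < δ)
    (hy : ∀ᶠ x in l, δ ≤ y x) (hk : Tendsto k l (𝓝 0))
    (hσ : (fun x => σ x - y x) =O[l] k) : (fun x => y x / σ x - 1) =O[l] k := by
  have hσ_ge : ∀ᶠ x in l, δ / 2 ≤ σ x := by
    filter_upwards [hy, (hσ.trans_tendsto hk).eventually
      (Metric.closedBall_mem_nhds 0 (half_pos hδ))] with x hyx hx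
    rw [Real.dist_eq, sub_zero, abs_le] at hx
    linarith [hx.1]
  have hquot : (fun x => (y x - σ x) * (σ x)⁻¹) =O[l] fun x => k x * 1 :=
    (hσ.neg_left.congr_left fun x => by ring).mul
      (isBigO_inv_one_of_eventually_ge (half_pos hδ) hσ_ge)
  refine hquot.congr' ?_ (by simp)
  filter_upwards [hσ_ge] with x hx
  field_simp [((half_pos hδ).trans_le hx).ne']
end

lemma patankar_sub_explicit_step_eq {ι : Type*} [Fintype ι] (P D : ι → ι → ℝ) (A y σ : ι → ℝ)
    (h : ℝ) (i : ι)
    (hsys : y i = A i + (3/2) * h * (∑ j, P i j * y j / σ j - ∑ j, D i j * y i / σ i)) :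
    y i - (A i + (3/2) * h * (∑ j, P i j - ∑ j, D i j)) =
      (3/2) * h * (∑ j, P i j * (y j / σ j - 1) - ∑ j, D i j * (y i / σ i - 1)) := by
  simp only [mul_sub, mul_one, mul_div_assoc, Finset.sum_sub_distrib] at hsys ⊢
  linear_combination hsys

theorem mpms2_accuracy_mechanism_general
    (M : ℕ)
    (P D : Fin M → Fin M → ℝ)
    (A : Fin M → ℝ) (δ : ℝ) (hδ : 0 < δ)
    (y σ : ℝ → Fin M → ℝ)
    (hbound : ∀ᶠ h in 𝓝[>] (0:ℝ), ∀ i, δ ≤ y h i ∧ y h i ≤ 1/δ)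
    (hσ : ∀ i, (fun h : ℝ => σ h i - y h i) =O[𝓝[>] (0:ℝ)] fun h : ℝ => h ^ 2)
    (hsys : ∀ᶠ h in 𝓝[>] (0:ℝ), ∀ i,
      y h i = A i + (3/2) * h *
        (∑ j, P i j * y h j / σ h j - ∑ j, D i j * y h i / σ h i)) :
    ∀ i, (fun h : ℝ =>
        y h i - (A i + (3/2) * h * (∑ j, P i j - ∑ j, D i j)))
      =O[𝓝[>] (0:ℝ)] fun h : ℝ => h ^ 3 := by
  have hsq : Tendsto (fun h : ℝ => h ^ 2) (𝓝[>] 0) (𝓝 0) :=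
    ((continuous_pow 2).tendsto' 0 0 (zero_pow two_ne_zero)).mono_left nhdsWithin_le_nhds
  have hratio : ∀ j, (fun h => y h j / σ h j - 1) =O[𝓝[>] (0:ℝ)] fun h : ℝ => h ^ 2 := fun j =>
    isBigO_div_sub_one hδ (hbound.mono fun h hb => (hb j).1) hsq (hσ j)
  intro i
  have hsum : (fun h => ∑ j, P i j * (y h j / σ h j - 1) - ∑ j, D i j * (y h i / σ h i - 1))
      =O[𝓝[>] (0:ℝ)] fun h : ℝ => h ^ 2 :=
    (IsBigO.fun_sum fun j _ => (hratio j).const_mul_left (P i j)).sub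
      (IsBigO.fun_sum fun j _ => (hratio i).const_mul_left (D i j))
  have hstep : (fun h : ℝ => (3/2) * h) =O[𝓝[>] (0:ℝ)] fun h : ℝ => h :=
    (isBigO_refl _ _).const_mul_left _
  refine (hstep.mul hsum).congr' ?_ (.of_forall fun h => by ring)
  filter_upwards [hsys] with h hs
  exact (patankar_sub_explicit_step_eq P D A (y h) (σ h) h i (hs i)).symm

/-- The sufficient condition `σ = y + O(h²)` forces the second-order MP multistep
step to agree with the underlying explicit step up to `O(h³)`: if for all small
`h > 0` the implicit solution `y h` is bounded between `δ` and `1/δ`, satisfies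
the Patankar fixed-point system with data `A`, and `σ h i − y h i = O(h²)`, then
`y h i = A i + (3/2) h (∑ j, P i j − ∑ j, D i j) + O(h³)` for every `i`. -/
theorem mpms2_accuracy_mechanism
    (M : ℕ) (hM : 1 ≤ M)
    (P D : Fin M → Fin M → ℝ)
    (hP : ∀ i j, 0 ≤ P i j) (hD : ∀ i j, 0 ≤ D i j)
    (A : Fin M → ℝ) (δ : ℝ) (hδ : 0 < δ)
    (y σ : ℝ → Fin M → ℝ)
    (hbound : ∀ᶠ h in 𝓝[>] (0:ℝ), ∀ i, δ ≤ y h i ∧ y h i ≤ 1/δ)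
    (hσ : ∀ i, (fun h : ℝ => σ h i - y h i) =O[𝓝[>] (0:ℝ)] fun h : ℝ => h ^ 2)
    (hsys : ∀ᶠ h in 𝓝[>] (0:ℝ), ∀ i,
      y h i = A i + (3/2) * h *
        (∑ j, P i j * y h j / σ h j - ∑ j, D i j * y h i / σ h i)) :
    ∀ i, (fun h : ℝ =>
        y h i - (A i + (3/2) * h * (∑ j, P i j - ∑ j, D i j)))
      =O[𝓝[>] (0:ℝ)] fun h : ℝ => h ^ 3 :=
  mpms2_accuracy_mechanism_general M P D A δ hδ y σ hbound hσ hsys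
end

section
/- Let M ≥ 1, Δt₀ > 0, and let F : ℝ^M → ℝ^M satisfy the positivity assumption: whenever x ∈ ℝ^M has x_i ≥ 0 for all i, then x_i + τ F_i(x) ≥ 0 for all i and all 0 ≤ τ ≤ Δt₀. Let c^{n−2}, c^n ∈ ℝ^M with c_i^{n−2} > 0 and c_i^n > 0 for all i, let p_{ij}, d_{ij} ≥ 0 satisfy p_{ij} = d_{ji}, let σ_1,…,σ_M > 0, and let 0 < Δt ≤ Δt₀/2. Then b_i := (1/4)c_i^{n−2} + (3/4)c_i^n + (3/2)Δt F_i(c^n) satisfies b_i > 0 for all i, and the system c_i^{n+1} = b_i + (3/2)Δt ( Σ_j p_{ij} c_j^{n+1}/σ_j − Σ_j d_{ij} c_i^{n+1}/σ_i ) has a unique solution with c_i^{n+1} > 0 for all i. -/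
open Finset

noncomputable def Bmat (M : ℕ) (α : ℝ) (p d : Fin M → Fin M → ℝ) (σ : Fin M → ℝ) :
    Matrix (Fin M) (Fin M) ℝ :=
  fun i j => (if i = j then 1 + α * (∑ k, d i k) / σ i else 0) - α * p i j / σ j

lemma Bmat_mulVec {M : ℕ} (α : ℝ) (p d : Fin M → Fin M → ℝ) (σ : Fin M → ℝ)
    (c : Fin M → ℝ) (i : Fin M) :
    (Bmat M α p d σ).mulVec c i =
      c i + α * ((∑ k, d i k) * c i / σ i) - α * ∑ j, p i j * c j / σ j := by
  have h2 : ∑ x : Fin M, α * p i x / σ x * c x = α * ∑ j, p i j * c j / σ j := by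
    rw [Finset.mul_sum]
    exact Finset.sum_congr rfl fun j _ => by ring
  simp only [Matrix.mulVec, dotProduct, Bmat, sub_mul, Finset.sum_sub_distrib,
    ite_mul, zero_mul]
  rw [Finset.sum_ite_eq univ i]
  simp only [mem_univ, if_true]
  rw [h2]
  ring

lemma mpms2_sum_bound {M : ℕ} (α : ℝ) (hα : 0 ≤ α)
    (p d : Fin M → Fin M → ℝ) (hp : ∀ i j, 0 ≤ p i j)
    (hpd : ∀ i j, p i j = d j i)
    (σ : Fin M → ℝ) (hσ : ∀ i, 0 < σ i)
    (c : Fin M → ℝ) :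
    ∑ i ∈ univ.filter (fun i => c i ≤ 0), (Bmat M α p d σ).mulVec c i
      ≤ ∑ j ∈ univ.filter (fun j => c j ≤ 0), c j := by
  set S := univ.filter (fun i : Fin M => c i ≤ 0) with hS
  have hswap : ∑ i ∈ S, (Bmat M α p d σ).mulVec c i
      = ∑ j : Fin M, (∑ i ∈ S, Bmat M α p d σ i j) * c j := by
    simp only [Matrix.mulVec, dotProduct]
    rw [Finset.sum_comm]
    exact Finset.sum_congr rfl fun j _ => (Finset.sum_mul _ _ _).symm
  have hcol : ∀ j, ∑ i ∈ S, Bmat M α p d σ i j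
      = (if j ∈ S then 1 + α * (∑ k, d j k) / σ j else 0)
        - α * (∑ i ∈ S, p i j) / σ j := by
    intro j
    simp only [Bmat, Finset.sum_sub_distrib]
    congr 1
    · rw [Finset.sum_ite_eq' S j]
    · simp only [Finset.sum_div, Finset.mul_sum, mul_div_assoc]
  have hcoef1 : ∀ j ∈ S, (1:ℝ) ≤ ∑ i ∈ S, Bmat M α p d σ i j := by
    intro j hj
    rw [hcol j, if_pos hj]
    have h1 : ∑ i ∈ S, p i j ≤ ∑ k, d j k := by
      calc ∑ i ∈ S, p i j ≤ ∑ i : Fin M, p i j :=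
            Finset.sum_le_sum_of_subset_of_nonneg (Finset.subset_univ S)
              (fun i _ _ => hp i j)
        _ = ∑ k, d j k := Finset.sum_congr rfl fun i _ => hpd i j
    have h2 : α * (∑ i ∈ S, p i j) / σ j ≤ α * (∑ k, d j k) / σ j :=
      (div_le_div_iff_of_pos_right (hσ j)).mpr (mul_le_mul_of_nonneg_left h1 hα)
    linarith
  have hcoef2 : ∀ j, j ∉ S → ∑ i ∈ S, Bmat M α p d σ i j ≤ 0 := by
    intro j hj
    rw [hcol j, if_neg hj]
    have : 0 ≤ α * (∑ i ∈ S, p i j) / σ j :=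
      div_nonneg (mul_nonneg hα (Finset.sum_nonneg fun i _ => hp i j)) (hσ j).le
    linarith
  rw [hswap, ← Finset.sum_filter_add_sum_filter_not univ (fun j => c j ≤ 0)
    (fun j => (∑ i ∈ S, Bmat M α p d σ i j) * c j)]
  have hA : ∑ j ∈ S, (∑ i ∈ S, Bmat M α p d σ i j) * c j ≤ ∑ j ∈ S, c j := by
    apply Finset.sum_le_sum
    intro j hj
    have hcj : c j ≤ 0 := (Finset.mem_filter.mp hj).2
    nlinarith [hcoef1 j hj]
  have hB : ∑ j ∈ univ.filter (fun j => ¬ c j ≤ 0),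
      (∑ i ∈ S, Bmat M α p d σ i j) * c j ≤ 0 := by
    apply Finset.sum_nonpos
    intro j hj
    have hj' := (Finset.mem_filter.mp hj).2
    have hcj : 0 ≤ c j := le_of_lt (lt_of_not_ge hj')
    have hS' : j ∉ S := by
      simp only [hS, Finset.mem_filter, mem_univ, true_and]
      exact hj'
    exact mul_nonpos_of_nonpos_of_nonneg (hcoef2 j hS') hcj
  linarith

lemma mpms2_nonneg_of_zero {M : ℕ} (α : ℝ) (hα : 0 ≤ α)
    (p d : Fin M → Fin M → ℝ) (hp : ∀ i j, 0 ≤ p i j)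
    (hpd : ∀ i j, p i j = d j i)
    (σ : Fin M → ℝ) (hσ : ∀ i, 0 < σ i)
    (c : Fin M → ℝ) (h : (Bmat M α p d σ).mulVec c = 0) :
    ∀ i, 0 ≤ c i := by
  have hb := mpms2_sum_bound α hα p d hp hpd σ hσ c
  rw [h] at hb
  simp only [Pi.zero_apply, Finset.sum_const_zero] at hb
  have hz : ∀ j ∈ univ.filter (fun j : Fin M => c j ≤ 0), c j = 0 := by
    have hle : ∑ j ∈ univ.filter (fun j : Fin M => c j ≤ 0), c j ≤ 0 :=
      Finset.sum_nonpos fun j hj => (Finset.mem_filter.mp hj).2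
    have heq : ∑ j ∈ univ.filter (fun j : Fin M => c j ≤ 0), c j = 0 := le_antisymm hle hb
    intro j hj
    have := (Finset.sum_eq_zero_iff_of_nonpos
      (fun j hj => (Finset.mem_filter.mp hj).2)).mp heq j hj
    exact this
  intro i
  by_cases hci : c i ≤ 0
  · have := hz i (Finset.mem_filter.mpr ⟨mem_univ i, hci⟩)
    linarith
  · linarith [lt_of_not_ge hci]

/-- Positivity of the fully discrete second-order MP multistep scheme with a
convection term: if forward Euler with `F` preserves nonnegativity for time steps
up to `Δt₀`, the data are positive, and `0 < Δt ≤ Δt₀/2`, then the explicit part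
`b i = (1/4)c^{n−2} i + (3/4)c^n i + (3/2)Δt F_i(c^n)` is positive, and the MPMS2
Patankar system with right-hand side `b` has a unique, entrywise positive solution. -/
theorem mpms2_full_scheme_positive
    (M : ℕ) (hM : 1 ≤ M) (Δt₀ : ℝ) (hΔt₀ : 0 < Δt₀)
    (F : (Fin M → ℝ) → Fin M → ℝ)
    (hF : ∀ x : Fin M → ℝ, (∀ i, 0 ≤ x i) →
      ∀ τ : ℝ, 0 ≤ τ → τ ≤ Δt₀ → ∀ i, 0 ≤ x i + τ * F x i)
    (cnm2 cn : Fin M → ℝ)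
    (hcnm2 : ∀ i, 0 < cnm2 i) (hcn : ∀ i, 0 < cn i)
    (p d : Fin M → Fin M → ℝ)
    (hp : ∀ i j, 0 ≤ p i j) (hd : ∀ i j, 0 ≤ d i j)
    (hpd : ∀ i j, p i j = d j i)
    (σ : Fin M → ℝ) (hσ : ∀ i, 0 < σ i)
    (Δt : ℝ) (hΔt : 0 < Δt) (hΔt2 : Δt ≤ Δt₀ / 2) :
    (∀ i, 0 < (1/4) * cnm2 i + (3/4) * cn i + (3/2) * Δt * F cn i) ∧
    (∃! c : Fin M → ℝ, ∀ i,
        c i = (1/4) * cnm2 i + (3/4) * cn i + (3/2) * Δt * F cn i +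
          (3/2) * Δt * (∑ j, p i j * c j / σ j - ∑ j, d i j * c i / σ i)) ∧
    (∀ c : Fin M → ℝ,
      (∀ i, c i = (1/4) * cnm2 i + (3/4) * cn i + (3/2) * Δt * F cn i +
        (3/2) * Δt * (∑ j, p i j * c j / σ j - ∑ j, d i j * c i / σ i)) →
      ∀ i, 0 < c i) := by
  set α : ℝ := (3/2) * Δt with hαdef
  have hα : 0 ≤ α := by positivity
  set b : Fin M → ℝ := fun i =>
    (1/4) * cnm2 i + (3/4) * cn i + (3/2) * Δt * F cn i with hbdef
  -- positivity of b
  have hb : ∀ i, 0 < b i := by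
    intro i
    have hτ1 : (0:ℝ) ≤ 2 * Δt := by linarith
    have hτ2 : 2 * Δt ≤ Δt₀ := by linarith
    have := hF cn (fun i => (hcn i).le) (2 * Δt) hτ1 hτ2 i
    have hc2 := hcnm2 i
    simp only [hbdef]
    nlinarith
  -- equivalence between the fixed-point equation and the matrix equation
  have hmveq : ∀ c : Fin M → ℝ,
      (∀ i, c i = b i + α * (∑ j, p i j * c j / σ j - ∑ j, d i j * c i / σ i)) ↔
      (Bmat M α p d σ).mulVec c = b := by
    intro c
    have key : ∀ i, (Bmat M α p d σ).mulVec c i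
        = c i + α * (∑ j, d i j * c i / σ i) - α * (∑ j, p i j * c j / σ j) := by
      intro i
      rw [Bmat_mulVec]
      have : (∑ j, d i j * c i / σ i) = (∑ k, d i k) * c i / σ i := by
        rw [← Finset.sum_div, ← Finset.sum_mul]
      rw [this]
    constructor
    · intro h
      funext i
      rw [key i]
      have := h i
      have hexp : α * (∑ j, p i j * c j / σ j - ∑ j, d i j * c i / σ i)
          = α * (∑ j, p i j * c j / σ j) - α * (∑ j, d i j * c i / σ i) := by ring
      rw [hexp] at this
      linarith
    · intro h i
      have := congrFun h i
      rw [key i] at this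
      have hexp : α * (∑ j, p i j * c j / σ j - ∑ j, d i j * c i / σ i)
          = α * (∑ j, p i j * c j / σ j) - α * (∑ j, d i j * c i / σ i) := by ring
      rw [hexp]
      linarith
  -- injectivity of the linear map
  have hinj : Function.Injective ((Bmat M α p d σ).mulVecLin) := by
    rw [injective_iff_map_eq_zero]
    intro c hc
    have hc' : (Bmat M α p d σ).mulVec c = 0 := hc
    have h1 : ∀ i, 0 ≤ c i := mpms2_nonneg_of_zero α hα p d hp hpd σ hσ c hc'
    have hc'' : (Bmat M α p d σ).mulVec (-c) = 0 := by
      rw [Matrix.mulVec_neg, hc', neg_zero]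
    have h2 : ∀ i, 0 ≤ -c i :=
      fun i => mpms2_nonneg_of_zero α hα p d hp hpd σ hσ (-c) hc'' i
    funext i
    have := h2 i
    have := h1 i
    simp only [Pi.zero_apply]
    linarith [h2 i]
  have hsurj : Function.Surjective ((Bmat M α p d σ).mulVecLin) :=
    LinearMap.injective_iff_surjective.mp hinj
  obtain ⟨c₀, hc₀⟩ := hsurj b
  have hc₀' : (Bmat M α p d σ).mulVec c₀ = b := hc₀
  -- positivity of any solution
  have hpos : ∀ c : Fin M → ℝ, (Bmat M α p d σ).mulVec c = b → ∀ i, 0 < c i := by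
    intro c hc i
    by_contra hci
    push_neg at hci
    have hne : (univ.filter (fun j : Fin M => c j ≤ 0)).Nonempty :=
      ⟨i, Finset.mem_filter.mpr ⟨mem_univ i, hci⟩⟩
    have hbd := mpms2_sum_bound α hα p d hp hpd σ hσ c
    rw [hc] at hbd
    have hposum : 0 < ∑ j ∈ univ.filter (fun j : Fin M => c j ≤ 0), b j :=
      Finset.sum_pos (fun j _ => hb j) hne
    have hle : ∑ j ∈ univ.filter (fun j : Fin M => c j ≤ 0), c j ≤ 0 :=
      Finset.sum_nonpos fun j hj => (Finset.mem_filter.mp hj).2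
    linarith
  refine ⟨hb, ⟨c₀, ?_, ?_⟩, ?_⟩
  · exact (hmveq c₀).mpr hc₀'
  · intro y hy
    exact hinj (show ((Bmat M α p d σ).mulVecLin) y = ((Bmat M α p d σ).mulVecLin) c₀ by
      have h1 : (Bmat M α p d σ).mulVec y = b := (hmveq y).mp hy
      have : ((Bmat M α p d σ).mulVecLin) y = b := h1
      rw [this, ← hc₀])
  · intro c hc i
    exact hpos c ((hmveq c).mp hc) i
end

section
/- Let M ≥ 1, Δt₀ > 0, and let F : ℝ^M → ℝ^M satisfy the positivity assumption: whenever x ∈ ℝ^M has x_i ≥ 0 for all i, then x_i + τ F_i(x) ≥ 0 for all i and all 0 ≤ τ ≤ Δt₀. Let c^{n−3}, c^n ∈ ℝ^M with c_i^{n−3} > 0 and c_i^n > 0 for all i, let two families p_{ij}^{n−3}, d_{ij}^{n−3} ≥ 0 and p_{ij}^n, d_{ij}^n ≥ 0 satisfy p_{ij}^{n−3} = d_{ji}^{n−3} and p_{ij}^n = d_{ji}^n, let σ_1,…,σ_M > 0, and let 0 < Δt ≤ Δt₀/3. Then b_i := (11/27)c_i^{n−3} + (16/27)c_i^n + Δt(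 (4/9)F_i(c^{n−3}) + (16/9)F_i(c^n) ) satisfies b_i > 0 for all i, and the system c_i^{n+1} = b_i + Δt ( Σ_j ((4/9)p_{ij}^{n−3} + (16/9)p_{ij}^n) c_j^{n+1}/σ_j − Σ_j ((4/9)d_{ij}^{n−3} + (16/9)d_{ij}^n) c_i^{n+1}/σ_i ) has a unique solution with c_i^{n+1} > 0 for all i. -/
open Finset

noncomputable def mpL {M : ℕ} (Δt : ℝ) (P D : Fin M → Fin M → ℝ) (σ : Fin M → ℝ) :
    (Fin M → ℝ) →ₗ[ℝ] (Fin M → ℝ) where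
  toFun c := fun i => c i - Δt * (∑ j, P i j * c j / σ j - ∑ j, D i j * c i / σ i)
  map_add' c d := by
    funext i
    simp only [Pi.add_apply]
    rw [show (∑ j, P i j * (c j + d j) / σ j)
        = ∑ j, (P i j * c j / σ j + P i j * d j / σ j) from
      Finset.sum_congr rfl (fun j _ => by ring)]
    rw [show (∑ j, D i j * (c i + d i) / σ i)
        = ∑ j, (D i j * c i / σ i + D i j * d i / σ i) from
      Finset.sum_congr rfl (fun j _ => by ring)]
    rw [Finset.sum_add_distrib, Finset.sum_add_distrib]
    ring
  map_smul' a c := by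
    funext i
    simp only [Pi.smul_apply, smul_eq_mul, RingHom.id_apply]
    rw [show (∑ j, P i j * (a * c j) / σ j) = ∑ j, a * (P i j * c j / σ j) from
      Finset.sum_congr rfl (fun j _ => by ring)]
    rw [show (∑ j, D i j * (a * c i) / σ i) = ∑ j, a * (D i j * c i / σ i) from
      Finset.sum_congr rfl (fun j _ => by ring)]
    rw [← Finset.mul_sum, ← Finset.mul_sum]
    ring

lemma mpL_sum_le {M : ℕ} (Δt : ℝ) (hΔt : 0 < Δt)
    (P D : Fin M → Fin M → ℝ) (hD : ∀ i j, 0 ≤ D i j) (hPD : ∀ i j, P i j = D j i)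
    (σ : Fin M → ℝ) (hσ : ∀ i, 0 < σ i)
    (c : Fin M → ℝ) (S : Finset (Fin M))
    (hS : ∀ a ∈ S, c a ≤ 0) (hS' : ∀ a, a ∉ S → 0 ≤ c a) :
    ∑ i ∈ S, mpL Δt P D σ c i ≤ ∑ i ∈ S, c i := by
  set f : Fin M → Fin M → ℝ := fun a b => D a b * c a / σ a with hf
  have key : ∑ a ∈ S, ∑ b ∈ Sᶜ, f a b ≤ ∑ a ∈ Sᶜ, ∑ b ∈ S, f a b := by
    have h1 : ∑ a ∈ S, ∑ b ∈ Sᶜ, f a b ≤ 0 := by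
      apply Finset.sum_nonpos
      intro a ha
      apply Finset.sum_nonpos
      intro b _
      show D a b * c a / σ a ≤ 0
      exact div_nonpos_of_nonpos_of_nonneg
        (mul_nonpos_of_nonneg_of_nonpos (hD a b) (hS a ha)) (hσ a).le
    have h2 : 0 ≤ ∑ a ∈ Sᶜ, ∑ b ∈ S, f a b := by
      apply Finset.sum_nonneg
      intro a ha
      apply Finset.sum_nonneg
      intro b _
      have h0 := hS' a (Finset.mem_compl.mp ha)
      exact div_nonneg (mul_nonneg (hD a b) h0) (hσ a).le
    linarith
  have hY : ∑ i ∈ S, ∑ j, D i j * c i / σ i = ∑ a ∈ S, ∑ b, f a b := rfl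
  have hX : ∑ i ∈ S, ∑ j, P i j * c j / σ j = ∑ a, ∑ b ∈ S, f a b := by
    rw [Finset.sum_comm]
    exact Finset.sum_congr rfl fun i _ => Finset.sum_congr rfl fun j _ => by
      rw [hPD]
  have hmain : ∑ i ∈ S, ∑ j, D i j * c i / σ i ≤ ∑ i ∈ S, ∑ j, P i j * c j / σ j := by
    rw [hY, hX]
    rw [show (∑ a ∈ S, ∑ b, f a b) = ∑ a ∈ S, (∑ b ∈ S, f a b + ∑ b ∈ Sᶜ, f a b) from
      Finset.sum_congr rfl fun a _ => (Finset.sum_add_sum_compl S (f a)).symm]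
    rw [show (∑ a, ∑ b ∈ S, f a b)
        = ∑ a ∈ S, ∑ b ∈ S, f a b + ∑ a ∈ Sᶜ, ∑ b ∈ S, f a b from
      (Finset.sum_add_sum_compl S (fun a => ∑ b ∈ S, f a b)).symm]
    rw [Finset.sum_add_distrib]
    linarith
  have : ∑ i ∈ S, mpL Δt P D σ c i
      = ∑ i ∈ S, c i - Δt * (∑ i ∈ S, ∑ j, P i j * c j / σ j
        - ∑ i ∈ S, ∑ j, D i j * c i / σ i) := by
    simp only [mpL, LinearMap.coe_mk, AddHom.coe_mk]
    rw [Finset.sum_sub_distrib, ← Finset.mul_sum, Finset.sum_sub_distrib]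
  rw [this]
  nlinarith [hmain]

lemma mpL_no_neg {M : ℕ} (Δt : ℝ) (hΔt : 0 < Δt)
    (P D : Fin M → Fin M → ℝ) (hD : ∀ i j, 0 ≤ D i j) (hPD : ∀ i j, P i j = D j i)
    (σ : Fin M → ℝ) (hσ : ∀ i, 0 < σ i)
    (d : Fin M → ℝ) (hd : mpL Δt P D σ d = 0) : ∀ i, ¬ d i < 0 := by
  intro i hi
  set S : Finset (Fin M) := Finset.univ.filter (fun a => d a < 0) with hSdef
  have hiS : i ∈ S := by simp [hSdef, hi]
  have h := mpL_sum_le Δt hΔt P D hD hPD σ hσ d S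
    (fun a ha => le_of_lt (by simpa [hSdef] using ha))
    (fun a ha => le_of_not_gt (by simpa [hSdef] using ha))
  rw [hd] at h
  simp only [Pi.zero_apply, Finset.sum_const_zero] at h
  have : ∑ a ∈ S, d a < 0 :=
    Finset.sum_neg (fun a ha => by simpa [hSdef] using ha) ⟨i, hiS⟩
  linarith

lemma mpL_injective {M : ℕ} (Δt : ℝ) (hΔt : 0 < Δt)
    (P D : Fin M → Fin M → ℝ) (hD : ∀ i j, 0 ≤ D i j) (hPD : ∀ i j, P i j = D j i)
    (σ : Fin M → ℝ) (hσ : ∀ i, 0 < σ i) :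
    Function.Injective (mpL Δt P D σ) := by
  rw [injective_iff_map_eq_zero]
  intro d hd
  funext i
  have h1 := mpL_no_neg Δt hΔt P D hD hPD σ hσ d hd i
  have h2 := mpL_no_neg Δt hΔt P D hD hPD σ hσ (-d) (by rw [map_neg, hd, neg_zero]) i
  simp only [Pi.neg_apply, neg_neg, neg_lt_zero] at h2
  have : d i = 0 := le_antisymm (le_of_not_gt (by simpa using h2)) (le_of_not_gt h1)
  simpa using this

lemma mpL_pos {M : ℕ} (Δt : ℝ) (hΔt : 0 < Δt)
    (P D : Fin M → Fin M → ℝ) (hD : ∀ i j, 0 ≤ D i j) (hPD : ∀ i j, P i j = D j i)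
    (σ : Fin M → ℝ) (hσ : ∀ i, 0 < σ i)
    (c b : Fin M → ℝ) (hb : ∀ i, 0 < b i) (hc : mpL Δt P D σ c = b) :
    ∀ i, 0 < c i := by
  intro i
  by_contra hi
  push_neg at hi
  set S : Finset (Fin M) := Finset.univ.filter (fun a => c a ≤ 0) with hSdef
  have hiS : i ∈ S := by simp [hSdef, hi]
  have h := mpL_sum_le Δt hΔt P D hD hPD σ hσ c S
    (fun a ha => by simpa [hSdef] using ha)
    (fun a ha => le_of_lt (lt_of_not_ge (by simpa [hSdef] using ha)))
  rw [hc] at h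
  have hbS : 0 < ∑ a ∈ S, b a := Finset.sum_pos (fun a _ => hb a) ⟨i, hiS⟩
  have hcS : ∑ a ∈ S, c a ≤ 0 :=
    Finset.sum_nonpos (fun a ha => by simpa [hSdef] using ha)
  linarith

/-- Positivity of the fully discrete third-order MP multistep scheme with a
convection term: if forward Euler with `F` preserves nonnegativity for time steps
up to `Δt₀`, the data are positive, and `0 < Δt ≤ Δt₀/3`, then the explicit part
`b i = (11/27)c^{n−3} i + (16/27)c^n i + Δt((4/9)F_i(c^{n−3}) + (16/9)F_i(c^n))` is
positive, and the MPMS3 Patankar system with right-hand side `b` has a unique,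
entrywise positive solution. -/
theorem mpms3_full_scheme_positive
    (M : ℕ) (hM : 1 ≤ M) (Δt₀ : ℝ) (hΔt₀ : 0 < Δt₀)
    (F : (Fin M → ℝ) → Fin M → ℝ)
    (hF : ∀ x : Fin M → ℝ, (∀ i, 0 ≤ x i) →
      ∀ τ : ℝ, 0 ≤ τ → τ ≤ Δt₀ → ∀ i, 0 ≤ x i + τ * F x i)
    (cnm3 cn : Fin M → ℝ)
    (hcnm3 : ∀ i, 0 < cnm3 i) (hcn : ∀ i, 0 < cn i)
    (pm3 dm3 pn dn : Fin M → Fin M → ℝ)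
    (hpm3 : ∀ i j, 0 ≤ pm3 i j) (hdm3 : ∀ i j, 0 ≤ dm3 i j)
    (hpn : ∀ i j, 0 ≤ pn i j) (hdn : ∀ i j, 0 ≤ dn i j)
    (hpdm3 : ∀ i j, pm3 i j = dm3 j i) (hpdn : ∀ i j, pn i j = dn j i)
    (σ : Fin M → ℝ) (hσ : ∀ i, 0 < σ i)
    (Δt : ℝ) (hΔt : 0 < Δt) (hΔt3 : Δt ≤ Δt₀ / 3) :
    (∀ i, 0 < (11/27) * cnm3 i + (16/27) * cn i +
        Δt * ((4/9) * F cnm3 i + (16/9) * F cn i)) ∧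
    (∃! c : Fin M → ℝ, ∀ i,
        c i = (11/27) * cnm3 i + (16/27) * cn i +
          Δt * ((4/9) * F cnm3 i + (16/9) * F cn i) +
          Δt * (∑ j, ((4/9) * pm3 i j + (16/9) * pn i j) * c j / σ j
              - ∑ j, ((4/9) * dm3 i j + (16/9) * dn i j) * c i / σ i)) ∧
    (∀ c : Fin M → ℝ,
      (∀ i, c i = (11/27) * cnm3 i + (16/27) * cn i +
        Δt * ((4/9) * F cnm3 i + (16/9) * F cn i) +
        Δt * (∑ j, ((4/9) * pm3 i j + (16/9) * pn i j) * c j / σ j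
            - ∑ j, ((4/9) * dm3 i j + (16/9) * dn i j) * c i / σ i)) →
      ∀ i, 0 < c i) := by
  set P : Fin M → Fin M → ℝ := fun i j => (4/9) * pm3 i j + (16/9) * pn i j with hPdef
  set D : Fin M → Fin M → ℝ := fun i j => (4/9) * dm3 i j + (16/9) * dn i j with hDdef
  set b : Fin M → ℝ := fun i => (11/27) * cnm3 i + (16/27) * cn i +
      Δt * ((4/9) * F cnm3 i + (16/9) * F cn i) with hbdef
  have hDnn : ∀ i j, 0 ≤ D i j := fun i j => by
    have := hdm3 i j; have := hdn i j; simp only [hDdef]; nlinarith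
  have hPD : ∀ i j, P i j = D j i := fun i j => by
    simp only [hPdef, hDdef, hpdm3 i j, hpdn i j]
  -- positivity of b
  have key : ∀ x : Fin M → ℝ, (∀ i, 0 < x i) → ∀ i, 0 ≤ x i + (3*Δt) * F x i := by
    intro x hx i
    exact hF x (fun i => (hx i).le) (3*Δt) (by linarith) (by linarith) i
  have hb : ∀ i, 0 < b i := by
    intro i
    have h1 := key cnm3 hcnm3 i
    have h2 := key cn hcn i
    have h3 := hcnm3 i
    simp only [hbdef]
    nlinarith
  -- the system as a linear equation
  have hsys : ∀ c : Fin M → ℝ,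
      (∀ i, c i = (11/27) * cnm3 i + (16/27) * cn i +
          Δt * ((4/9) * F cnm3 i + (16/9) * F cn i) +
          Δt * (∑ j, ((4/9) * pm3 i j + (16/9) * pn i j) * c j / σ j
              - ∑ j, ((4/9) * dm3 i j + (16/9) * dn i j) * c i / σ i))
      ↔ mpL Δt P D σ c = b := by
    intro c
    rw [funext_iff]
    apply forall_congr'
    intro i
    simp only [mpL, LinearMap.coe_mk, AddHom.coe_mk, hPdef, hDdef, hbdef]
    constructor <;> intro h <;> linarith
  have hinj := mpL_injective Δt hΔt P D hDnn hPD σ hσ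
  have hsurj : Function.Surjective (mpL Δt P D σ) :=
    (LinearMap.injective_iff_surjective).mp hinj
  obtain ⟨c₀, hc₀⟩ := hsurj b
  refine ⟨hb, ⟨c₀, (hsys c₀).mpr hc₀, ?_⟩, ?_⟩
  · intro y hy
    exact hinj (by rw [(hsys y).mp hy, hc₀])
  · intro c hc
    exact mpL_pos Δt hΔt P D hDnn hPD σ hσ c b hb ((hsys c).mp hc)
end

section
/- Let M ≥ 2. The admissible set G = { (ρ, m, n, E, c) ∈ ℝ × ℝ × ℝ × ℝ × ℝ^{M−1} : ρ > 0, E − (m² + n²)/(2ρ) > 0, c_i > 0 for all 1 ≤ i ≤ M−1, and Σ_{i=1}^{M−1} c_i < ρ } is a convex subset of ℝ^{M+3}. -/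
/-- Convexity of the admissible set `G` of the bound-preserving DG method for 2D
reactive Euler flows: the set of states `(ρ, m, n, E, c)` with positive density,
positive internal energy `E − (m² + n²)/(2ρ)`, positive partial densities `c i`,
and `∑ i, c i < ρ`, is convex. -/
theorem admissible_set_convex (M : ℕ) (hM : 2 ≤ M) :
    Convex ℝ {U : ℝ × ℝ × ℝ × ℝ × (Fin (M - 1) → ℝ) |
      0 < U.1 ∧
      0 < U.2.2.2.1 - (U.2.1 ^ 2 + U.2.2.1 ^ 2) / (2 * U.1) ∧
      (∀ i, 0 < U.2.2.2.2 i) ∧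
      (∑ i, U.2.2.2.2 i) < U.1} := by
  intro U hU V hV a b ha hb hab
  obtain ⟨ρ₁, m₁, n₁, E₁, c₁⟩ := U
  obtain ⟨ρ₂, m₂, n₂, E₂, c₂⟩ := V
  simp only [Set.mem_setOf_eq] at hU hV ⊢
  obtain ⟨hρ₁, hE₁, hc₁, hs₁⟩ := hU
  obtain ⟨hρ₂, hE₂, hc₂, hs₂⟩ := hV
  simp only [Prod.smul_mk, Prod.mk_add_mk, smul_eq_mul, Pi.add_apply, Pi.smul_apply,
    Finset.sum_add_distrib, ← Finset.mul_sum] at *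
  rcases ha.eq_or_lt with rfl | ha'
  · have hb1 : b = 1 := by linarith
    subst hb1
    simp only [zero_mul, one_mul, zero_add]
    exact ⟨hρ₂, hE₂, fun i => hc₂ i, hs₂⟩
  rcases hb.eq_or_lt with rfl | hb'
  · have ha1 : a = 1 := by linarith
    subst ha1
    simp only [zero_mul, one_mul, add_zero]
    exact ⟨hρ₁, hE₁, fun i => hc₁ i, hs₁⟩
  have hρ : 0 < a * ρ₁ + b * ρ₂ := by positivity
  refine ⟨hρ, ?_, fun i => by have := hc₁ i; have := hc₂ i; positivity, ?_⟩
  · rw [sub_pos, div_lt_iff₀ (by positivity)]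
    rw [sub_pos, div_lt_iff₀ (by positivity)] at hE₁ hE₂
    nlinarith [mul_pos ha' hb', mul_pos hρ₁ hρ₂, sq_nonneg (m₁ * ρ₂ - m₂ * ρ₁),
      sq_nonneg (n₁ * ρ₂ - n₂ * ρ₁), sq_nonneg a, sq_nonneg b,
      mul_lt_mul_of_pos_left hE₁ (mul_pos (mul_pos ha' ha') hρ₂),
      mul_lt_mul_of_pos_left hE₂ (mul_pos (mul_pos hb' hb') hρ₁),
      mul_lt_mul_of_pos_left hE₁ (mul_pos (mul_pos ha' hb') hρ₂),
      mul_lt_mul_of_pos_left hE₂ (mul_pos (mul_pos ha' hb') hρ₁)]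
  · have h1 := mul_lt_mul_of_pos_left hs₁ ha'
    have h2 := mul_lt_mul_of_pos_left hs₂ hb'
    linarith
end
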